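/- arXiv:1305.4314 — 2 statements merged into one kernel-verified Lean document; each statement's English description precedes it below -/
import Mathlib

section
/- Restricting to auxiliary variables where V is a deterministic function of U does not shrink the single-letter region: S_D = S_{D'}, where D' = D ∩ {P_{X,Y,Z,U,V} : H(V|U) = 0}. In particular, for every P_{X,Y,Z,U,V} ∈ D there exists P'_{X,Y,Z,U',V'} ∈ D (with V' a deterministic function of U') whose rate constraints are no larger: I(X;U',V') ≤ I(X;U,V), I(X;V') ≤ I(X;V), I(X,Y,Z;U',V') ≤ I(X,Y,Z;U,V). -/
open scoped BigOperators
open Finset Filter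

noncomputable section

/-- `p` is a probability mass function on the finite type `α`. -/
def IsPmf {α : Type} [Fintype α] (p : α → ℝ) : Prop :=
  (∀ a, 0 ≤ p a) ∧ ∑ a, p a = 1

/-- Total variation distance `‖p − q‖_TV = (1/2) Σ |p − q|`. -/
def TV {α : Type} [Fintype α] (p q : α → ℝ) : ℝ :=
  (∑ a, |p a - q a|) / 2

/-- The distribution (law) of the random variable `f` when the underlying
probability mass function is `p`. -/
def lawOf {Ω α : Type} [Fintype Ω] [DecidableEq α]
    (p : Ω → ℝ) (f : Ω → α) : α → ℝ :=
  fun a => ∑ ω, if f ω = a then p ω else 0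

/-- Shannon entropy (base 2) of a pmf on a finite type. -/
def H2 {α : Type} [Fintype α] (p : α → ℝ) : ℝ :=
  -∑ a, p a * Real.logb 2 (p a)

/-- Entropy `H(X)` of a random variable `X` under the pmf `p`. -/
def ent {Ω α : Type} [Fintype Ω] [Fintype α] [DecidableEq α]
    (p : Ω → ℝ) (X : Ω → α) : ℝ :=
  H2 (lawOf p X)

/-- Mutual information `I(X;Y)` under the pmf `p`. -/
def mi {Ω α β : Type} [Fintype Ω] [Fintype α] [Fintype β]
    [DecidableEq α] [DecidableEq β]
    (p : Ω → ℝ) (X : Ω → α) (Y : Ω → β) : ℝ :=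
  ent p X + ent p Y - ent p (fun ω => (X ω, Y ω))

/-- Conditional mutual information `I(X;Y|W)` under the pmf `p`. -/
def cmi {Ω α β γ : Type} [Fintype Ω] [Fintype α] [Fintype β] [Fintype γ]
    [DecidableEq α] [DecidableEq β] [DecidableEq γ]
    (p : Ω → ℝ) (X : Ω → α) (Y : Ω → β) (W : Ω → γ) : ℝ :=
  ent p (fun ω => (X ω, W ω)) + ent p (fun ω => (Y ω, W ω))
    - ent p (fun ω => (X ω, Y ω, W ω)) - ent p W

/-- `X` and `Y` are conditionally independent given `W` under `p`
(the Markov chain `X − W − Y`). -/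
def CondIndep {Ω α β γ : Type} [Fintype Ω] [Fintype α] [Fintype β] [Fintype γ]
    [DecidableEq α] [DecidableEq β] [DecidableEq γ]
    (p : Ω → ℝ) (X : Ω → α) (Y : Ω → β) (W : Ω → γ) : Prop :=
  ∀ x y w,
    lawOf p (fun ω => (X ω, Y ω, W ω)) (x, y, w) * lawOf p W w
      = lawOf p (fun ω => (X ω, W ω)) (x, w) * lawOf p (fun ω => (Y ω, W ω)) (y, w)

/-- `X` and `Y` are independent under `p`. -/
def IndepRV {Ω α β : Type} [Fintype Ω] [Fintype α] [Fintype β]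
    [DecidableEq α] [DecidableEq β]
    (p : Ω → ℝ) (X : Ω → α) (Y : Ω → β) : Prop :=
  ∀ a b, lawOf p (fun ω => (X ω, Y ω)) (a, b) = lawOf p X a * lawOf p Y b


/-- A `(M0, M1, M2, n)` secure cascade channel synthesis code: randomized
encoders `F : 𝒳^n × [M0] → [M1]`, `Genc : [M1] × [M0] → [M2]` and randomized
decoders `Gdec : [M1] × [M0] → 𝒴^n`, `Hdec : [M2] × [M0] → 𝒵^n`, each given by
a conditional pmf. -/
structure SCCSCode (𝒳 𝒴 𝒵 : Type) [Fintype 𝒳] [Fintype 𝒴] [Fintype 𝒵]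
    (n M0 M1 M2 : ℕ) where
  F : (Fin n → 𝒳) → Fin M0 → Fin M1 → ℝ
  Genc : Fin M1 → Fin M0 → Fin M2 → ℝ
  Gdec : Fin M1 → Fin M0 → (Fin n → 𝒴) → ℝ
  Hdec : Fin M2 → Fin M0 → (Fin n → 𝒵) → ℝ
  F_pmf : ∀ x k, IsPmf (F x k)
  Genc_pmf : ∀ j₁ k, IsPmf (Genc j₁ k)
  Gdec_pmf : ∀ j₁ k, IsPmf (Gdec j₁ k)
  Hdec_pmf : ∀ j₂ k, IsPmf (Hdec j₂ k)

variable {𝒳 𝒴 𝒵 : Type} [Fintype 𝒳] [Fintype 𝒴] [Fintype 𝒵]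
  [DecidableEq 𝒳] [DecidableEq 𝒴] [DecidableEq 𝒵]

/-- The joint distribution of `(X^n, Y^n, Z^n, K, J₁, J₂)` induced by an SCCS
code: `X^n` is iid `QX`, `K` is uniform on `[M0]` independent of `X^n`,
`J₁ = F(X^n,K)`, `J₂ = Genc(J₁,K)`, `Y^n = Gdec(J₁,K)`, `Z^n = Hdec(J₂,K)`. -/
def inducedFull {n M0 M1 M2 : ℕ} (QX : 𝒳 → ℝ) (c : SCCSCode 𝒳 𝒴 𝒵 n M0 M1 M2) :
    (Fin n → 𝒳) × (Fin n → 𝒴) × (Fin n → 𝒵) × Fin M0 × Fin M1 × Fin M2 → ℝ :=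
  fun w =>
    match w with
    | (x, y, z, k, j₁, j₂) =>
      (∏ t, QX (x t)) * (1 / (M0 : ℝ)) * c.F x k j₁ * c.Genc j₁ k j₂ *
        c.Gdec j₁ k y * c.Hdec j₂ k z

/-- The induced joint distribution of `(X^n, Y^n, Z^n, J₁, J₂)` (marginalizing
out the common randomness `K`). -/
def induced {n M0 M1 M2 : ℕ} (QX : 𝒳 → ℝ) (c : SCCSCode 𝒳 𝒴 𝒵 n M0 M1 M2) :
    (Fin n → 𝒳) × (Fin n → 𝒴) × (Fin n → 𝒵) × Fin M1 × Fin M2 → ℝ :=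
  lawOf (inducedFull QX c) (fun w => (w.1, w.2.1, w.2.2.1, w.2.2.2.2.1, w.2.2.2.2.2))

/-- The marginal distribution of the message pair `(J₁, J₂)`. -/
def msgLaw {n M0 M1 M2 : ℕ} (QX : 𝒳 → ℝ) (c : SCCSCode 𝒳 𝒴 𝒵 n M0 M1 M2) :
    Fin M1 × Fin M2 → ℝ :=
  lawOf (inducedFull QX c) (fun w => (w.2.2.2.2.1, w.2.2.2.2.2))

/-- The target distribution: messages carry their own marginal, and
`(X^n,Y^n,Z^n)` is iid `Q_X Q_{YZ|X}` independent of the messages. -/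
def target {n M0 M1 M2 : ℕ} (QX : 𝒳 → ℝ) (QYZ : 𝒳 → 𝒴 × 𝒵 → ℝ)
    (c : SCCSCode 𝒳 𝒴 𝒵 n M0 M1 M2) :
    (Fin n → 𝒳) × (Fin n → 𝒴) × (Fin n → 𝒵) × Fin M1 × Fin M2 → ℝ :=
  fun w =>
    match w with
    | (x, y, z, j₁, j₂) =>
      msgLaw QX c (j₁, j₂) * ∏ t, QX (x t) * QYZ (x t) (y t, z t)

/-- A rate triple `(R0, R1, R2)` is achievable for secure cascade channel
synthesis of `Q_{YZ|X}` from the source `Q_X` if there is a sequence of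
SCCS codes with message/common-randomness alphabets of sizes at most
`2^{nR0}, 2^{nR1}, 2^{nR2}` whose induced distributions approach the target
in total variation. -/
def Achievable (QX : 𝒳 → ℝ) (QYZ : 𝒳 → 𝒴 × 𝒵 → ℝ) (R0 R1 R2 : ℝ) : Prop :=
  ∃ (M0 M1 M2 : ℕ → ℕ) (c : ∀ n, SCCSCode 𝒳 𝒴 𝒵 n (M0 n) (M1 n) (M2 n)),
    (∀ n : ℕ, (M0 n : ℝ) ≤ 2 ^ ((n : ℝ) * R0) ∧
      (M1 n : ℝ) ≤ 2 ^ ((n : ℝ) * R1) ∧ (M2 n : ℝ) ≤ 2 ^ ((n : ℝ) * R2)) ∧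
    Tendsto (fun n => TV (induced QX (c n)) (target QX QYZ (c n))) atTop (nhds 0)

/-- Membership in the set `D`: the `(X,Y,Z)`-marginal of `p` is
`Q_X Q_{YZ|X}`, and the Markov chains `X − (U,V) − Y` and `(X,Y,U) − V − Z`
hold. -/
def InD {𝒰 𝒱 : Type} [Fintype 𝒰] [Fintype 𝒱] [DecidableEq 𝒰] [DecidableEq 𝒱]
    (QX : 𝒳 → ℝ) (QYZ : 𝒳 → 𝒴 × 𝒵 → ℝ)
    (p : 𝒳 × 𝒴 × 𝒵 × 𝒰 × 𝒱 → ℝ) : Prop :=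
  IsPmf p ∧
  (∀ x y z, lawOf p (fun w => (w.1, w.2.1, w.2.2.1)) (x, y, z) = QX x * QYZ x (y, z)) ∧
  CondIndep p (fun w => w.1) (fun w => w.2.1) (fun w => (w.2.2.2.1, w.2.2.2.2)) ∧
  CondIndep p (fun w => (w.1, w.2.1, w.2.2.2.1)) (fun w => w.2.2.1) (fun w => w.2.2.2.2)

/-- The single-letter region `S_D`. -/
def InSD (QX : 𝒳 → ℝ) (QYZ : 𝒳 → 𝒴 × 𝒵 → ℝ) (R0 R1 R2 : ℝ) : Prop :=
  ∃ (nU nV : ℕ) (p : 𝒳 × 𝒴 × 𝒵 × Fin nU × Fin nV → ℝ),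
    nV ≤ Fintype.card 𝒳 * Fintype.card 𝒴 * Fintype.card 𝒵 + 3 ∧
    nU ≤ Fintype.card 𝒳 * Fintype.card 𝒴 * Fintype.card 𝒵 * nV + 2 ∧
    InD QX QYZ p ∧
    mi p (fun w => w.1) (fun w => (w.2.2.2.1, w.2.2.2.2)) ≤ R1 ∧
    mi p (fun w => w.1) (fun w => w.2.2.2.2) ≤ R2 ∧
    mi p (fun w => (w.1, w.2.1, w.2.2.1)) (fun w => (w.2.2.2.1, w.2.2.2.2)) ≤ R0

/-- The single-letter region `S_{D'}`, where additionally `H(V|U) = 0`,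
i.e. `V` is a deterministic function of `U`. -/
def InSD' {𝒳 𝒴 𝒵 : Type} [Fintype 𝒳] [Fintype 𝒴] [Fintype 𝒵]
    [DecidableEq 𝒳] [DecidableEq 𝒴] [DecidableEq 𝒵]
    (QX : 𝒳 → ℝ) (QYZ : 𝒳 → 𝒴 × 𝒵 → ℝ) (R0 R1 R2 : ℝ) : Prop :=
  ∃ (nU nV : ℕ) (p : 𝒳 × 𝒴 × 𝒵 × Fin nU × Fin nV → ℝ),
    nV ≤ Fintype.card 𝒳 * Fintype.card 𝒴 * Fintype.card 𝒵 + 3 ∧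
    nU ≤ Fintype.card 𝒳 * Fintype.card 𝒴 * Fintype.card 𝒵 * nV + 2 ∧
    InD QX QYZ p ∧
    -- `H(V|U) = 0` : the entropy of the pair `(U,V)` equals that of `U`
    ent p (fun w => (w.2.2.2.1, w.2.2.2.2)) = ent p (fun w => w.2.2.2.1) ∧
    mi p (fun w => w.1) (fun w => (w.2.2.2.1, w.2.2.2.2)) ≤ R1 ∧
    mi p (fun w => w.1) (fun w => w.2.2.2.2) ≤ R2 ∧
    mi p (fun w => (w.1, w.2.1, w.2.2.1)) (fun w => (w.2.2.2.1, w.2.2.2.2)) ≤ R0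



set_option linter.unusedSectionVars false
set_option maxHeartbeats 1000000

section Helpers

variable {Ω Ω' α β γ : Type} [Fintype Ω] [Fintype Ω']

lemma lawOf_nonneg [DecidableEq α] {p : Ω → ℝ} (hp : ∀ ω, 0 ≤ p ω) (f : Ω → α) (a : α) :
    0 ≤ lawOf p f a := by
  refine Finset.sum_nonneg fun ω _ => ?_
  split <;> simp [hp ω]

lemma sum_lawOf [Fintype α] [DecidableEq α] (p : Ω → ℝ) (f : Ω → α) :
    ∑ a, lawOf p f a = ∑ ω, p ω := by
  unfold lawOf
  rw [Finset.sum_comm]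
  refine Finset.sum_congr rfl fun ω _ => ?_
  simp

lemma lawOf_comp [Fintype α] [DecidableEq α] [DecidableEq β] (p : Ω → ℝ) (f : Ω → α) (g : α → β) :
    lawOf p (fun ω => g (f ω)) = lawOf (lawOf p f) g := by
  funext b
  unfold lawOf
  have : ∀ a : α, (if g a = b then (∑ ω, if f ω = a then p ω else 0) else 0)
      = ∑ ω, if f ω = a then (if g a = b then p ω else 0) else 0 := by
    intro a
    split
    · rfl
    · simp
  rw [Finset.sum_congr rfl fun a _ => this a, Finset.sum_comm]
  refine Finset.sum_congr rfl fun ω _ => ?_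
  rw [Finset.sum_eq_single (f ω)]
  · simp
  · intro a _ ha; simp [Ne.symm ha]
  · simp

lemma lawOf_map_point [DecidableEq α] [DecidableEq β] {e : α → β} (he : Function.Injective e)
    (p : Ω → ℝ) (f : Ω → α) (c : α) :
    lawOf p (fun ω => e (f ω)) (e c) = lawOf p f c := by
  unfold lawOf
  refine Finset.sum_congr rfl fun ω _ => ?_
  simp [he.eq_iff]

lemma ent_comp_inj [Fintype α] [Fintype β] [DecidableEq α] [DecidableEq β] {e : α → β}
    (he : Function.Injective e) (p : Ω → ℝ) (f : Ω → α) :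
    ent p (fun ω => e (f ω)) = ent p f := by
  unfold ent H2
  have hz : ∀ b ∈ (univ : Finset β), b ∉ (univ : Finset α).image e →
      lawOf p (fun ω => e (f ω)) b * Real.logb 2 (lawOf p (fun ω => e (f ω)) b) = 0 := by
    intro b _ hb
    have : lawOf p (fun ω => e (f ω)) b = 0 := by
      unfold lawOf
      refine Finset.sum_eq_zero fun ω _ => ?_
      have : e (f ω) ≠ b := fun h => hb (Finset.mem_image.2 ⟨f ω, Finset.mem_univ _, h⟩)
      simp [this]
    simp [this]
  rw [← Finset.sum_subset (Finset.subset_univ ((univ : Finset α).image e)) hz]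
  rw [Finset.sum_image (fun x _ y _ h => he h)]
  congr 1
  refine Finset.sum_congr rfl fun a _ => ?_
  rw [lawOf_map_point he]

lemma H2_grouping {ι A : Type} [Fintype ι] [Fintype A] (lam : ι → ℝ) (s : ι → A → ℝ)
    (hs1 : ∀ i, lam i ≠ 0 → ∑ a, s i a = 1) :
    H2 (fun x : ι × A => lam x.1 * s x.1 x.2) = H2 lam + ∑ i, lam i * H2 (s i) := by
  unfold H2
  rw [Fintype.sum_prod_type]
  have key : ∀ i, ∑ a, (lam i * s i a) * Real.logb 2 (lam i * s i a)
      = lam i * Real.logb 2 (lam i) + lam i * ∑ a, s i a * Real.logb 2 (s i a) := by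
    intro i
    by_cases hi : lam i = 0
    · simp [hi]
    · have h2 : ∀ a, (lam i * s i a) * Real.logb 2 (lam i * s i a)
          = (lam i * Real.logb 2 (lam i)) * s i a + lam i * (s i a * Real.logb 2 (s i a)) := by
        intro a
        by_cases ha : s i a = 0
        · simp [ha]
        · rw [Real.logb_mul hi ha]; ring
      rw [Finset.sum_congr rfl fun a _ => h2 a, Finset.sum_add_distrib, ← Finset.mul_sum,
        ← Finset.mul_sum, hs1 i hi]
      ring
  rw [Finset.sum_congr rfl fun i _ => key i, Finset.sum_add_distrib, neg_add]
  congr 1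
  rw [← Finset.sum_neg_distrib]
  refine Finset.sum_congr rfl fun i _ => ?_
  ring

lemma lawOf_pair {ι A B : Type} [Fintype ι] [Fintype A] [DecidableEq ι] [DecidableEq B]
    (lam : ι → ℝ) (s : ι → A → ℝ) (g : A → B) (i : ι) (b : B) :
    lawOf (fun x : ι × A => lam x.1 * s x.1 x.2) (fun x => (x.1, g x.2)) (i, b)
      = lam i * lawOf (s i) g b := by
  unfold lawOf
  rw [Fintype.sum_prod_type]
  rw [Finset.sum_eq_single i]
  · rw [Finset.mul_sum]
    refine Finset.sum_congr rfl fun a _ => ?_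
    by_cases h : g a = b
    · simp [h]
    · simp [h, Prod.ext_iff]
  · intro i' _ hi'
    refine Finset.sum_eq_zero fun a _ => ?_
    simp [Prod.ext_iff, hi']
  · simp

lemma lawOf_fst {ι A : Type} [Fintype ι] [Fintype A] [DecidableEq ι]
    (P : ι × A → ℝ) (i : ι) : lawOf P Prod.fst i = ∑ a, P (i, a) := by
  unfold lawOf
  rw [Fintype.sum_prod_type]
  rw [Finset.sum_eq_single i]
  · refine Finset.sum_congr rfl fun a _ => ?_; simp
  · intro i' _ hi'; refine Finset.sum_eq_zero fun a _ => ?_; simp [hi']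
  · simp

lemma lawOf_snd {ι A : Type} [Fintype ι] [Fintype A] [DecidableEq A]
    (P : ι × A → ℝ) (a : A) : lawOf P Prod.snd a = ∑ i, P (i, a) := by
  unfold lawOf
  rw [Fintype.sum_prod_type]
  refine Finset.sum_congr rfl fun i _ => ?_
  simp

lemma lawOf_equiv {α : Type} [DecidableEq α] (P : Ω' → ℝ) (e : Ω ≃ Ω') (f : Ω → α) :
    lawOf (fun ω => P (e ω)) f = lawOf P (fun x => f (e.symm x)) := by
  funext a
  unfold lawOf
  rw [← Equiv.sum_comp e (fun x => if f (e.symm x) = a then P x else 0)]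
  simp

lemma lawOf_id' {α : Type} [Fintype α] [DecidableEq α] (s : α → ℝ) :
    lawOf s (fun a => a) = s := by
  funext b
  unfold lawOf
  simp

lemma sum_dite_emb {ι : Type} [Fintype ι] [DecidableEq ι] {N : ℕ} (emb : ι → Fin N)
    (hinj : Function.Injective emb) (g : ι → ℝ) :
    ∑ i : Fin N, (if h : ∃ j, emb j = i then g h.choose else 0) = ∑ j : ι, g j := by
  classical
  rw [← Finset.sum_subset (Finset.subset_univ ((univ : Finset ι).image emb))]
  · rw [Finset.sum_image (fun x _ y _ h => hinj h)]
    refine Finset.sum_congr rfl fun j _ => ?_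
    have h : ∃ j', emb j' = emb j := ⟨j, rfl⟩
    rw [dif_pos h]
    congr 1
    exact hinj h.choose_spec
  · intro i _ hi
    rw [dif_neg]
    rintro ⟨j, rfl⟩
    exact hi (Finset.mem_image.2 ⟨j, Finset.mem_univ _, rfl⟩)

end Helpers

section Machine

variable {𝒳 𝒴 𝒵 : Type} [Fintype 𝒳] [Fintype 𝒴] [Fintype 𝒵]
  [DecidableEq 𝒳] [DecidableEq 𝒴] [DecidableEq 𝒵] {nU nV : ℕ}

/-- the "inner" alphabet `A = 𝒳 × 𝒴 × 𝒵 × 𝒱` -/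
local notation "Abt" => (𝒳 × 𝒴 × 𝒵 × Fin nV)

def amap : 𝒳 × 𝒴 × 𝒵 × Fin nU × Fin nV → 𝒳 × 𝒴 × 𝒵 × Fin nV :=
  fun ω => (ω.1, ω.2.1, ω.2.2.1, ω.2.2.2.2)

def tmap : 𝒳 × 𝒴 × 𝒵 × Fin nU × Fin nV → Fin nU × Fin nV :=
  fun ω => (ω.2.2.2.1, ω.2.2.2.2)

def mapT : 𝒳 × 𝒴 × 𝒵 × Fin nU × Fin nV → (Fin nU × Fin nV) × (𝒳 × 𝒴 × 𝒵 × Fin nV) :=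
  fun ω => (tmap ω, amap ω)

variable (p : 𝒳 × 𝒴 × 𝒵 × Fin nU × Fin nV → ℝ)

def rj : (Fin nU × Fin nV) × (𝒳 × 𝒴 × 𝒵 × Fin nV) → ℝ := lawOf p mapT

def wgt : Fin nU × Fin nV → ℝ := lawOf p tmap

def qc (t : Fin nU × Fin nV) (a : 𝒳 × 𝒴 × 𝒵 × Fin nV) : ℝ := rj p (t, a) / wgt p t

def mm : 𝒳 × 𝒴 × 𝒵 × Fin nV → ℝ := lawOf p amap

lemma wgt_eq_sum : ∀ t, wgt p t = ∑ a, rj p (t, a) := by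
  intro t
  have h : wgt p t = lawOf (rj p) Prod.fst t := by
    unfold wgt rj
    rw [← lawOf_comp p mapT Prod.fst]
    rfl
  rw [h, lawOf_fst]

lemma mm_eq_sum : ∀ a, mm p a = ∑ t, rj p (t, a) := by
  intro a
  have h : mm p a = lawOf (rj p) Prod.snd a := by
    unfold mm rj
    rw [← lawOf_comp p mapT Prod.snd]
    rfl
  rw [h, lawOf_snd]

variable (hp0 : ∀ ω, 0 ≤ p ω)
include hp0

lemma rj_nonneg : ∀ x, 0 ≤ rj p x := fun x => lawOf_nonneg hp0 _ x

lemma wgt_nonneg : ∀ t, 0 ≤ wgt p t := fun t => lawOf_nonneg hp0 _ t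

lemma rj_zero_of_wgt {t} (h : wgt p t = 0) : ∀ a, rj p (t, a) = 0 := by
  intro a
  have hsum := (wgt_eq_sum p t).symm.trans h
  have := (Finset.sum_eq_zero_iff_of_nonneg (fun a _ => rj_nonneg p hp0 (t, a))).1 hsum
  exact this a (Finset.mem_univ a)

lemma rj_eq : ∀ x, rj p x = wgt p x.1 * qc p x.1 x.2 := by
  rintro ⟨t, a⟩
  by_cases h : wgt p t = 0
  · simp [qc, h, rj_zero_of_wgt p hp0 h a]
  · unfold qc
    rw [mul_div_cancel₀ _ h]

lemma qc_nonneg : ∀ t a, 0 ≤ qc p t a := by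
  intro t a
  exact div_nonneg (rj_nonneg p hp0 _) (wgt_nonneg p hp0 _)

lemma qc_sum {t} (h : wgt p t ≠ 0) : ∑ a, qc p t a = 1 := by
  unfold qc
  rw [← Finset.sum_div, ← wgt_eq_sum, div_self h]

/-- support: `q t` vanishes unless the `v`-component equals `t.2` -/
lemma qc_support : ∀ t a, a.2.2.2 ≠ t.2 → qc p t a = 0 := by
  intro t a ha
  have hr : rj p (t, a) = 0 := by
    unfold rj lawOf
    refine Finset.sum_eq_zero fun ω _ => ?_
    have : ¬(mapT ω = (t, a)) := by
      rintro h
      apply ha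
      have h1 : (tmap ω).2 = t.2 := by rw [show tmap ω = t from congrArg Prod.fst h]
      have h2 : (amap ω).2.2.2 = a.2.2.2 := by rw [show amap ω = a from congrArg Prod.snd h]
      unfold tmap at h1; unfold amap at h2
      simp at h1 h2
      rw [← h2, ← h1]
    simp [this]
  unfold qc
  rw [hr, zero_div]

lemma lawOf_qc_vcomp_zero {B : Type} [DecidableEq B] (t : Fin nU × Fin nV)
    (g : 𝒳 × 𝒴 × 𝒵 × Fin nV → B) (vext : B → Fin nV) (hg : ∀ a, vext (g a) = a.2.2.2)
    (b : B) (hb : vext b ≠ t.2) : lawOf (qc p t) g b = 0 := by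
  unfold lawOf
  refine Finset.sum_eq_zero fun a _ => ?_
  by_cases h : g a = b
  · have : a.2.2.2 ≠ t.2 := by rw [← hg a, h]; exact hb
    simp [h, qc_support p hp0 t a this]
  · simp [h]

lemma lawOf_qc_vproj_eq_one {t} (h : wgt p t ≠ 0) :
    lawOf (qc p t) (fun a => a.2.2.2) t.2 = 1 := by
  unfold lawOf
  rw [← qc_sum p hp0 h]
  refine Finset.sum_congr rfl fun a _ => ?_
  by_cases hv : a.2.2.2 = t.2
  · simp [hv]
  · simp [hv, qc_support p hp0 t a hv]

lemma H2_lawOf_vproj_eq_zero {t} (h : wgt p t ≠ 0) :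
    H2 (lawOf (qc p t) (fun a => a.2.2.2)) = 0 := by
  unfold H2
  rw [neg_eq_zero]
  refine Finset.sum_eq_zero fun v _ => ?_
  by_cases hv : v = t.2
  · rw [hv, lawOf_qc_vproj_eq_one p hp0 h]; simp
  · rw [lawOf_qc_vcomp_zero p hp0 t _ (fun v => v) (fun a => rfl) v hv]; simp

end Machine

section Machine2

variable {𝒳 𝒴 𝒵 : Type} [Fintype 𝒳] [Fintype 𝒴] [Fintype 𝒵]
  [DecidableEq 𝒳] [DecidableEq 𝒴] [DecidableEq 𝒵] {nU nV : ℕ}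

variable (p : 𝒳 × 𝒴 × 𝒵 × Fin nU × Fin nV → ℝ)

/-- law of `((U,V), g(X,Y,Z,V))` in terms of `wgt` and `qc`. -/
lemma lawOf_p_pair (hp0 : ∀ ω, 0 ≤ p ω) {B : Type} [DecidableEq B]
    (g : 𝒳 × 𝒴 × 𝒵 × Fin nV → B) (t : Fin nU × Fin nV) (b : B) :
    lawOf p (fun ω => (tmap ω, g (amap ω))) (t, b) = wgt p t * lawOf (qc p t) g b := by
  have h1 : lawOf p (fun ω => (tmap ω, g (amap ω)))
      = lawOf (rj p) (fun x => (x.1, g x.2)) := by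
    exact lawOf_comp p mapT (fun x => (x.1, g x.2))
  have h2 : rj p = fun x => wgt p x.1 * qc p x.1 x.2 := funext (rj_eq p hp0)
  rw [h1, h2, lawOf_pair]

/-- the reindexing equivalence for the product form -/
def eqvP {N : ℕ} : (𝒳 × 𝒴 × 𝒵 × Fin N × Fin nV) ≃ (Fin N × (𝒳 × 𝒴 × 𝒵 × Fin nV)) where
  toFun ω := (ω.2.2.2.1, amap ω)
  invFun x := (x.2.1, x.2.2.1, x.2.2.2.1, x.1, x.2.2.2.2)
  left_inv ω := rfl
  right_inv x := rfl

variable {N : ℕ} (lam : Fin N → ℝ) (s : Fin N → 𝒳 × 𝒴 × 𝒵 × Fin nV → ℝ)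

/-- the new distribution built from weights `lam` and conditionals `s` -/
def pNew : 𝒳 × 𝒴 × 𝒵 × Fin N × Fin nV → ℝ :=
  fun ω => lam ω.2.2.2.1 * s ω.2.2.2.1 (amap ω)

lemma lawOf_pNew {B : Type} [DecidableEq B] (g : 𝒳 × 𝒴 × 𝒵 × Fin nV → B) (i : Fin N) (b : B) :
    lawOf (pNew lam s) (fun ω => (ω.2.2.2.1, g (amap ω))) (i, b)
      = lam i * lawOf (s i) g b := by
  have h1 : lawOf (pNew lam s) (fun ω => (ω.2.2.2.1, g (amap ω)))
      = lawOf (fun x : Fin N × (𝒳 × 𝒴 × 𝒵 × Fin nV) => lam x.1 * s x.1 x.2)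
          (fun x => (x.1, g x.2)) := by
    have := lawOf_equiv (Ω := 𝒳 × 𝒴 × 𝒵 × Fin N × Fin nV)
      (fun x : Fin N × (𝒳 × 𝒴 × 𝒵 × Fin nV) => lam x.1 * s x.1 x.2)
      (eqvP (𝒳 := 𝒳) (𝒴 := 𝒴) (𝒵 := 𝒵) (N := N) (nV := nV))
      (fun ω => (ω.2.2.2.1, g (amap ω)))
    exact this
  rw [h1, lawOf_pair]

lemma lawOf_pNew_idx (hσ : ∀ i, lam i * (∑ a, s i a) = lam i) :
    lawOf (pNew lam s) (fun ω => ω.2.2.2.1) = lam := by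
  funext i
  have h1 : lawOf (pNew lam s) (fun ω => ω.2.2.2.1)
      = lawOf (fun x : Fin N × (𝒳 × 𝒴 × 𝒵 × Fin nV) => lam x.1 * s x.1 x.2) Prod.fst := by
    have := lawOf_equiv (Ω := 𝒳 × 𝒴 × 𝒵 × Fin N × Fin nV)
      (fun x : Fin N × (𝒳 × 𝒴 × 𝒵 × Fin nV) => lam x.1 * s x.1 x.2)
      (eqvP (𝒳 := 𝒳) (𝒴 := 𝒴) (𝒵 := 𝒵) (N := N) (nV := nV))
      (fun ω => ω.2.2.2.1)
    exact this
  rw [h1, lawOf_fst]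
  simpa [← Finset.mul_sum] using hσ i

/-- marginal of `pNew` on `(X,Y,Z,V)` -/
lemma lawOf_pNew_amap :
    lawOf (pNew lam s) amap = fun a => ∑ i, lam i * s i a := by
  funext a
  have h1 : lawOf (pNew lam s) amap
      = lawOf (fun x : Fin N × (𝒳 × 𝒴 × 𝒵 × Fin nV) => lam x.1 * s x.1 x.2) Prod.snd := by
    have := lawOf_equiv (Ω := 𝒳 × 𝒴 × 𝒵 × Fin N × Fin nV)
      (fun x : Fin N × (𝒳 × 𝒴 × 𝒵 × Fin nV) => lam x.1 * s x.1 x.2)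
      (eqvP (𝒳 := 𝒳) (𝒴 := 𝒴) (𝒵 := 𝒵) (N := N) (nV := nV))
      amap
    exact this
  rw [h1, lawOf_snd]

end Machine2

section Machine3

lemma law_transport {Ω γ δ : Type} [Fintype Ω] [DecidableEq γ] [DecidableEq δ]
    (p : Ω → ℝ) (F : Ω → γ) (G : Ω → δ) (e : γ → δ) (he : Function.Injective e)
    (hFG : ∀ ω, e (F ω) = G ω) (c : γ) : lawOf p G (e c) = lawOf p F c := by
  have h : G = fun ω => e (F ω) := funext fun ω => (hFG ω).symm
  rw [h]; exact lawOf_map_point he p F c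

variable {𝒳 𝒴 𝒵 : Type} [Fintype 𝒳] [Fintype 𝒴] [Fintype 𝒵]
  [DecidableEq 𝒳] [DecidableEq 𝒴] [DecidableEq 𝒵] {nU nV : ℕ}

variable (p : 𝒳 × 𝒴 × 𝒵 × Fin nU × Fin nV → ℝ)

/-- value of a law of `p` that is a relabelling of `((U,V), g(X,Y,Z,V))`. -/
lemma law_value (hp0 : ∀ ω, 0 ≤ p ω) {B γ : Type} [Fintype B] [DecidableEq B] [DecidableEq γ]
    (g : 𝒳 × 𝒴 × 𝒵 × Fin nV → B)
    (F : (𝒳 × 𝒴 × 𝒵 × Fin nU × Fin nV) → γ) (e : γ → (Fin nU × Fin nV) × B)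
    (he : Function.Injective e) (hFG : ∀ ω, e (F ω) = (tmap ω, g (amap ω)))
    (c : γ) :
    lawOf p F c = wgt p (e c).1 * lawOf (qc p (e c).1) g (e c).2 := by
  have h1 := law_transport p F (fun ω => (tmap ω, g (amap ω))) e he hFG c
  rw [← h1]
  exact lawOf_p_pair p hp0 g (e c).1 (e c).2

/-- value of a law of `pNew` that is a relabelling of `(U', g(X,Y,Z,V))`. -/
lemma law_value_new {N : ℕ} (lam : Fin N → ℝ) (s : Fin N → 𝒳 × 𝒴 × 𝒵 × Fin nV → ℝ)
    {B γ : Type} [Fintype B] [DecidableEq B] [DecidableEq γ]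
    (g : 𝒳 × 𝒴 × 𝒵 × Fin nV → B)
    (F : (𝒳 × 𝒴 × 𝒵 × Fin N × Fin nV) → γ) (e : γ → Fin N × B)
    (he : Function.Injective e) (hFG : ∀ ω, e (F ω) = (ω.2.2.2.1, g (amap ω)))
    (c : γ) :
    lawOf (pNew lam s) F c = lam (e c).1 * lawOf (s (e c).1) g (e c).2 := by
  have h1 := law_transport (pNew lam s) F (fun ω => (ω.2.2.2.1, g (amap ω))) e he hFG c
  rw [← h1]
  exact lawOf_pNew lam s g (e c).1 (e c).2

/-- general entropy decomposition, old side -/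
lemma ent_p_pair (hp0 : ∀ ω, 0 ≤ p ω) {B : Type} [Fintype B] [DecidableEq B]
    (g : 𝒳 × 𝒴 × 𝒵 × Fin nV → B) :
    ent p (fun ω => (tmap ω, g (amap ω)))
      = H2 (wgt p) + ∑ t, wgt p t * H2 (lawOf (qc p t) g) := by
  unfold ent
  have h1 : lawOf p (fun ω => (tmap ω, g (amap ω)))
      = fun x : (Fin nU × Fin nV) × B => wgt p x.1 * lawOf (qc p x.1) g x.2 := by
    funext x
    obtain ⟨t, b⟩ := x
    exact lawOf_p_pair p hp0 g t b
  rw [h1]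
  exact H2_grouping (wgt p) (fun t => lawOf (qc p t) g)
    (fun t ht => by rw [sum_lawOf, qc_sum p hp0 ht])

/-- general entropy decomposition, new side -/
lemma ent_pNew_pair {N : ℕ} (lam : Fin N → ℝ) (s : Fin N → 𝒳 × 𝒴 × 𝒵 × Fin nV → ℝ)
    (hs1 : ∀ i, lam i ≠ 0 → ∑ a, s i a = 1)
    {B : Type} [Fintype B] [DecidableEq B] (g : 𝒳 × 𝒴 × 𝒵 × Fin nV → B) :
    ent (pNew lam s) (fun ω => (ω.2.2.2.1, g (amap ω)))
      = H2 lam + ∑ i, lam i * H2 (lawOf (s i) g) := by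
  unfold ent
  have h1 : lawOf (pNew lam s) (fun ω => (ω.2.2.2.1, g (amap ω)))
      = fun x : Fin N × B => lam x.1 * lawOf (s x.1) g x.2 := by
    funext x
    obtain ⟨i, b⟩ := x
    exact lawOf_pNew lam s g i b
  rw [h1]
  exact H2_grouping lam (fun i => lawOf (s i) g)
    (fun i hi => by rw [sum_lawOf, hs1 i hi])

/-- per-`t` version of the Markov chain `X − (U,V) − Y` -/
lemma chainC1 (hp0 : ∀ ω, 0 ≤ p ω)
    (hch : CondIndep p (fun w => w.1) (fun w => w.2.1) (fun w => (w.2.2.2.1, w.2.2.2.2)))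
    {t : Fin nU × Fin nV} (hwt : wgt p t ≠ 0) (x : 𝒳) (y : 𝒴) (v : Fin nV) :
    lawOf (qc p t) (fun a => (a.1, a.2.1, a.2.2.2)) (x, y, v)
        * lawOf (qc p t) (fun a => a.2.2.2) v
      = lawOf (qc p t) (fun a => (a.1, a.2.2.2)) (x, v)
        * lawOf (qc p t) (fun a => (a.2.1, a.2.2.2)) (y, v) := by
  by_cases hv : v = t.2
  · subst hv
    have heXY : Function.Injective (fun c : 𝒳 × 𝒴 × (Fin nU × Fin nV) =>
        ((c.2.2, (c.1, c.2.1, c.2.2.2)) : (Fin nU × Fin nV) × (𝒳 × 𝒴 × Fin nV))) := by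
      intro a b h
      simp only [Prod.ext_iff] at h ⊢
      exact ⟨h.2.1, h.2.2.1, h.1⟩
    have hXY := law_value p hp0 (fun a => (a.1, a.2.1, a.2.2.2))
      (fun ω => (ω.1, ω.2.1, (ω.2.2.2.1, ω.2.2.2.2)))
      (fun c => (c.2.2, (c.1, c.2.1, c.2.2.2))) heXY (fun ω => rfl) (x, y, t)
    have heX : Function.Injective (fun c : 𝒳 × (Fin nU × Fin nV) =>
        ((c.2, (c.1, c.2.2)) : (Fin nU × Fin nV) × (𝒳 × Fin nV))) := by
      intro a b h
      simp only [Prod.ext_iff] at h ⊢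
      exact ⟨h.2.1, h.1⟩
    have hX := law_value p hp0 (fun a => (a.1, a.2.2.2))
      (fun ω => (ω.1, (ω.2.2.2.1, ω.2.2.2.2)))
      (fun c => (c.2, (c.1, c.2.2))) heX (fun ω => rfl) (x, t)
    have heY : Function.Injective (fun c : 𝒴 × (Fin nU × Fin nV) =>
        ((c.2, (c.1, c.2.2)) : (Fin nU × Fin nV) × (𝒴 × Fin nV))) := by
      intro a b h
      simp only [Prod.ext_iff] at h ⊢
      exact ⟨h.2.1, h.1⟩
    have hY := law_value p hp0 (fun a => (a.2.1, a.2.2.2))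
      (fun ω => (ω.2.1, (ω.2.2.2.1, ω.2.2.2.2)))
      (fun c => (c.2, (c.1, c.2.2))) heY (fun ω => rfl) (y, t)
    have hUV : lawOf p (fun ω : 𝒳 × 𝒴 × 𝒵 × Fin nU × Fin nV =>
        ((ω.2.2.2.1, ω.2.2.2.2) : Fin nU × Fin nV)) t = wgt p t := rfl
    have hc := hch x y t
    rw [hXY, hX, hY, hUV] at hc
    rw [lawOf_qc_vproj_eq_one p hp0 hwt, mul_one]
    refine mul_left_cancel₀ (mul_ne_zero hwt hwt) ?_
    simp only at hc
    linear_combination hc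
  · rw [lawOf_qc_vcomp_zero p hp0 t _ (fun b : 𝒳 × 𝒴 × Fin nV => b.2.2) (fun a => rfl) _ hv,
      lawOf_qc_vcomp_zero p hp0 t _ (fun b : 𝒳 × Fin nV => b.2) (fun a => rfl) _ hv]
    ring

end Machine3

section Machine4

variable {𝒳 𝒴 𝒵 : Type} [Fintype 𝒳] [Fintype 𝒴] [Fintype 𝒵]
  [DecidableEq 𝒳] [DecidableEq 𝒴] [DecidableEq 𝒵] {nU nV : ℕ}

variable (p : 𝒳 × 𝒴 × 𝒵 × Fin nU × Fin nV → ℝ)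

lemma law_p_V : lawOf p (fun ω => ω.2.2.2.2) = lawOf (mm p) (fun a => a.2.2.2) := by
  exact lawOf_comp p amap (fun a => a.2.2.2)

lemma law_p_ZV : lawOf p (fun ω => (ω.2.2.1, ω.2.2.2.2))
    = lawOf (mm p) (fun a => (a.2.2.1, a.2.2.2)) := by
  exact lawOf_comp p amap (fun a => (a.2.2.1, a.2.2.2))

/-- per-`t` version of the Markov chain `(X,Y,U) − V − Z` -/
lemma chainC2 (hp0 : ∀ ω, 0 ≤ p ω)
    (hch : CondIndep p (fun w => (w.1, w.2.1, w.2.2.2.1)) (fun w => w.2.2.1)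
      (fun w => w.2.2.2.2))
    {t : Fin nU × Fin nV} (hwt : wgt p t ≠ 0) (x : 𝒳) (y : 𝒴) (z : 𝒵) (v : Fin nV) :
    qc p t (x, y, z, v) * lawOf (mm p) (fun a => a.2.2.2) v
      = lawOf (qc p t) (fun a => (a.1, a.2.1, a.2.2.2)) (x, y, v)
        * lawOf (mm p) (fun a => (a.2.2.1, a.2.2.2)) (z, v) := by
  by_cases hv : v = t.2
  · subst hv
    have heA : Function.Injective (fun c : (𝒳 × 𝒴 × Fin nU) × 𝒵 × Fin nV =>
        (((c.1.2.2, c.2.2), (c.1.1, c.1.2.1, c.2.1, c.2.2))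
          : (Fin nU × Fin nV) × (𝒳 × 𝒴 × 𝒵 × Fin nV))) := by
      intro a b h
      simp only [Prod.ext_iff] at h ⊢
      exact ⟨⟨h.2.1, h.2.2.1, h.1.1⟩, h.2.2.2.1, h.1.2⟩
    have hA := law_value p hp0 (fun a => a)
      (fun ω => ((ω.1, ω.2.1, ω.2.2.2.1), (ω.2.2.1, ω.2.2.2.2)))
      (fun c => ((c.1.2.2, c.2.2), (c.1.1, c.1.2.1, c.2.1, c.2.2))) heA (fun ω => rfl)
      ((x, y, t.1), (z, t.2))
    have heB : Function.Injective (fun c : (𝒳 × 𝒴 × Fin nU) × Fin nV =>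
        (((c.1.2.2, c.2), (c.1.1, c.1.2.1, c.2)) : (Fin nU × Fin nV) × (𝒳 × 𝒴 × Fin nV))) := by
      intro a b h
      simp only [Prod.ext_iff] at h ⊢
      exact ⟨⟨h.2.1, h.2.2.1, h.1.1⟩, h.1.2⟩
    have hB := law_value p hp0 (fun a => (a.1, a.2.1, a.2.2.2))
      (fun ω => ((ω.1, ω.2.1, ω.2.2.2.1), ω.2.2.2.2))
      (fun c => ((c.1.2.2, c.2), (c.1.1, c.1.2.1, c.2))) heB (fun ω => rfl)
      ((x, y, t.1), t.2)
    have hc := hch (x, y, t.1) z t.2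
    rw [hA, hB, law_p_V, law_p_ZV] at hc
    simp only at hc
    -- hc : wgt p (t.1,t.2) * lawOf (qc p (t.1,t.2)) id (x,y,z,t.2) * mV t.2 = ...
    have hid : lawOf (qc p (t.1, t.2)) (fun a => a) (x, y, z, t.2) = qc p t (x, y, z, t.2) := by
      rw [lawOf_id']
    rw [hid] at hc
    refine mul_left_cancel₀ hwt ?_
    linear_combination hc
  · rw [qc_support p hp0 t _ hv,
      lawOf_qc_vcomp_zero p hp0 t _ (fun b : 𝒳 × 𝒴 × Fin nV => b.2.2) (fun a => rfl) _ hv]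
    ring

end Machine4

section Machine5

variable {𝒳 𝒴 𝒵 : Type} [Fintype 𝒳] [Fintype 𝒴] [Fintype 𝒵]
  [DecidableEq 𝒳] [DecidableEq 𝒴] [DecidableEq 𝒵] {nU nV : ℕ}

variable (QX : 𝒳 → ℝ) (QYZ : 𝒳 → 𝒴 × 𝒵 → ℝ)
variable (p : 𝒳 × 𝒴 × 𝒵 × Fin nU × Fin nV → ℝ)
variable {N : ℕ} (lam : Fin N → ℝ) (s : Fin N → 𝒳 × 𝒴 × 𝒵 × Fin nV → ℝ)

def InD' {𝒰 𝒱 : Type} [Fintype 𝒰] [Fintype 𝒱] [DecidableEq 𝒰] [DecidableEq 𝒱]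
    (QX : 𝒳 → ℝ) (QYZ : 𝒳 → 𝒴 × 𝒵 → ℝ)
    (p : 𝒳 × 𝒴 × 𝒵 × 𝒰 × 𝒱 → ℝ) : Prop :=
  IsPmf p ∧
  (∀ x y z, lawOf p (fun w => (w.1, w.2.1, w.2.2.1)) (x, y, z) = QX x * QYZ x (y, z)) ∧
  CondIndep p (fun w => w.1) (fun w => w.2.1) (fun w => (w.2.2.2.1, w.2.2.2.2)) ∧
  CondIndep p (fun w => (w.1, w.2.1, w.2.2.2.1)) (fun w => w.2.2.1) (fun w => w.2.2.2.2)

theorem pNew_good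
    (hInD : InD' QX QYZ p)
    (hlam0 : ∀ i, 0 ≤ lam i)
    (hs0 : ∀ i a, 0 ≤ s i a)
    (hsel : ∀ i, lam i ≠ 0 → ∃ t, wgt p t ≠ 0 ∧ s i = qc p t)
    (hmarg : (fun a => ∑ i, lam i * s i a) = mm p)
    (hH1 : ∑ i, lam i * H2 (lawOf (s i) (fun a => (a.1, a.2.2.2)))
        = ∑ t, wgt p t * H2 (lawOf (qc p t) (fun a => (a.1, a.2.2.2))))
    (hH2 : ∑ i, lam i * H2 (lawOf (s i) (fun a => a))
        = ∑ t, wgt p t * H2 (lawOf (qc p t) (fun a => a))) :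
    InD' QX QYZ (pNew lam s) ∧
    ent (pNew lam s) (fun w => (w.2.2.2.1, w.2.2.2.2)) = ent (pNew lam s) (fun w => w.2.2.2.1) ∧
    mi (pNew lam s) (fun w => w.1) (fun w => (w.2.2.2.1, w.2.2.2.2))
      = mi p (fun w => w.1) (fun w => (w.2.2.2.1, w.2.2.2.2)) ∧
    mi (pNew lam s) (fun w => w.1) (fun w => w.2.2.2.2)
      = mi p (fun w => w.1) (fun w => w.2.2.2.2) ∧
    mi (pNew lam s) (fun w => (w.1, w.2.1, w.2.2.1)) (fun w => (w.2.2.2.1, w.2.2.2.2))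
      = mi p (fun w => (w.1, w.2.1, w.2.2.1)) (fun w => (w.2.2.2.1, w.2.2.2.2)) := by
  obtain ⟨⟨hp0, hp1⟩, hmarg0, hch1, hch2⟩ := hInD
  have hs1 : ∀ i, lam i ≠ 0 → ∑ a, s i a = 1 := by
    intro i hi
    obtain ⟨t, hwt, hsi⟩ := hsel i hi
    rw [hsi]
    exact qc_sum p hp0 hwt
  have hσ : ∀ i, lam i * (∑ a, s i a) = lam i := by
    intro i
    by_cases hi : lam i = 0
    · simp [hi]
    · rw [hs1 i hi, mul_one]
  have hAm : lawOf (pNew lam s) amap = mm p := by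
    rw [lawOf_pNew_amap]; exact hmarg
  -- IsPmf
  have hpmf : IsPmf (pNew lam s) := by
    constructor
    · intro ω; exact mul_nonneg (hlam0 _) (hs0 _ _)
    · have h1 := sum_lawOf (pNew lam s) amap
      have h2 := sum_lawOf p amap
      rw [hAm] at h1
      rw [← h1]
      show ∑ a, lawOf p amap a = 1
      rw [h2]
      exact hp1
  -- marginal
  have hmargN : ∀ x y z, lawOf (pNew lam s) (fun w => (w.1, w.2.1, w.2.2.1)) (x, y, z)
      = QX x * QYZ x (y, z) := by
    have e1 : lawOf (pNew lam s) (fun w => (w.1, w.2.1, w.2.2.1))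
        = lawOf (mm p) (fun a => (a.1, a.2.1, a.2.2.1)) := by
      rw [← hAm]
      exact lawOf_comp (pNew lam s) amap (fun a => (a.1, a.2.1, a.2.2.1))
    have e2 : lawOf p (fun w => (w.1, w.2.1, w.2.2.1))
        = lawOf (mm p) (fun a => (a.1, a.2.1, a.2.2.1)) :=
      lawOf_comp p amap (fun a => (a.1, a.2.1, a.2.2.1))
    intro x y z
    rw [e1, ← e2]
    exact hmarg0 x y z
  -- Markov chain 1 for pNew
  have hch1N : CondIndep (pNew lam s) (fun w => w.1) (fun w => w.2.1)
      (fun w => (w.2.2.2.1, w.2.2.2.2)) := by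
    have goal : ∀ (x : 𝒳) (y : 𝒴) (w : Fin N × Fin nV),
        lawOf (pNew lam s) (fun ω => (ω.1, ω.2.1, (ω.2.2.2.1, ω.2.2.2.2))) (x, y, w)
            * lawOf (pNew lam s) (fun ω => ((ω.2.2.2.1, ω.2.2.2.2) : Fin N × Fin nV)) w
          = lawOf (pNew lam s) (fun ω => (ω.1, (ω.2.2.2.1, ω.2.2.2.2))) (x, w)
            * lawOf (pNew lam s) (fun ω => (ω.2.1, (ω.2.2.2.1, ω.2.2.2.2))) (y, w) := by
      rintro x y ⟨i, v⟩
      have heXY : Function.Injective (fun c : 𝒳 × 𝒴 × (Fin N × Fin nV) =>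
          ((c.2.2.1, (c.1, c.2.1, c.2.2.2)) : Fin N × (𝒳 × 𝒴 × Fin nV))) := by
        intro a b h
        simp only [Prod.ext_iff] at h ⊢
        exact ⟨h.2.1, h.2.2.1, h.1, h.2.2.2⟩
      have hXY := law_value_new lam s (fun a => (a.1, a.2.1, a.2.2.2))
        (fun ω => (ω.1, ω.2.1, (ω.2.2.2.1, ω.2.2.2.2)))
        (fun c => (c.2.2.1, (c.1, c.2.1, c.2.2.2))) heXY (fun ω => rfl) (x, y, (i, v))
      have hW := law_value_new lam s (fun a => a.2.2.2)
        (fun ω => ((ω.2.2.2.1, ω.2.2.2.2) : Fin N × Fin nV))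
        (fun c => c) (fun a b h => h) (fun ω => rfl) (i, v)
      have heX : Function.Injective (fun c : 𝒳 × (Fin N × Fin nV) =>
          ((c.2.1, (c.1, c.2.2)) : Fin N × (𝒳 × Fin nV))) := by
        intro a b h
        simp only [Prod.ext_iff] at h ⊢
        exact ⟨h.2.1, h.1, h.2.2⟩
      have hX := law_value_new lam s (fun a => (a.1, a.2.2.2))
        (fun ω => (ω.1, (ω.2.2.2.1, ω.2.2.2.2)))
        (fun c => (c.2.1, (c.1, c.2.2))) heX (fun ω => rfl) (x, (i, v))
      have heY : Function.Injective (fun c : 𝒴 × (Fin N × Fin nV) =>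
          ((c.2.1, (c.1, c.2.2)) : Fin N × (𝒴 × Fin nV))) := by
        intro a b h
        simp only [Prod.ext_iff] at h ⊢
        exact ⟨h.2.1, h.1, h.2.2⟩
      have hY := law_value_new lam s (fun a => (a.2.1, a.2.2.2))
        (fun ω => (ω.2.1, (ω.2.2.2.1, ω.2.2.2.2)))
        (fun c => (c.2.1, (c.1, c.2.2))) heY (fun ω => rfl) (y, (i, v))
      rw [hXY, hW, hX, hY]
      simp only
      by_cases hi : lam i = 0
      · rw [hi]; ring
      · obtain ⟨t, hwt, hsi⟩ := hsel i hi
        rw [hsi]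
        have hc := chainC1 p hp0 hch1 hwt x y v
        linear_combination (lam i * lam i) * hc
    exact goal
  -- Markov chain 2 for pNew
  have hch2N : CondIndep (pNew lam s) (fun w => (w.1, w.2.1, w.2.2.2.1)) (fun w => w.2.2.1)
      (fun w => w.2.2.2.2) := by
    have hV : lawOf (pNew lam s) (fun ω => ω.2.2.2.2)
        = lawOf (mm p) (fun a => a.2.2.2) := by
      rw [← hAm]
      exact lawOf_comp (pNew lam s) amap (fun a => a.2.2.2)
    have hZV : lawOf (pNew lam s) (fun ω => (ω.2.2.1, ω.2.2.2.2))
        = lawOf (mm p) (fun a => (a.2.2.1, a.2.2.2)) := by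
      rw [← hAm]
      exact lawOf_comp (pNew lam s) amap (fun a => (a.2.2.1, a.2.2.2))
    have goal : ∀ (c : 𝒳 × 𝒴 × Fin N) (z : 𝒵) (v : Fin nV),
        lawOf (pNew lam s) (fun ω => ((ω.1, ω.2.1, ω.2.2.2.1), ω.2.2.1, ω.2.2.2.2)) (c, z, v)
            * lawOf (pNew lam s) (fun ω => ω.2.2.2.2) v
          = lawOf (pNew lam s) (fun ω => ((ω.1, ω.2.1, ω.2.2.2.1), ω.2.2.2.2)) (c, v)
            * lawOf (pNew lam s) (fun ω => (ω.2.2.1, ω.2.2.2.2)) (z, v) := by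
      rintro ⟨x, y, i⟩ z v
      have heA : Function.Injective (fun c : (𝒳 × 𝒴 × Fin N) × 𝒵 × Fin nV =>
          ((c.1.2.2, (c.1.1, c.1.2.1, c.2.1, c.2.2)) : Fin N × (𝒳 × 𝒴 × 𝒵 × Fin nV))) := by
        intro a b h
        simp only [Prod.ext_iff] at h ⊢
        exact ⟨⟨h.2.1, h.2.2.1, h.1⟩, h.2.2.2.1, h.2.2.2.2⟩
      have hA := law_value_new lam s (fun a => a)
        (fun ω => ((ω.1, ω.2.1, ω.2.2.2.1), ω.2.2.1, ω.2.2.2.2))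
        (fun c => (c.1.2.2, (c.1.1, c.1.2.1, c.2.1, c.2.2))) heA (fun ω => rfl)
        ((x, y, i), (z, v))
      have heB : Function.Injective (fun c : (𝒳 × 𝒴 × Fin N) × Fin nV =>
          ((c.1.2.2, (c.1.1, c.1.2.1, c.2)) : Fin N × (𝒳 × 𝒴 × Fin nV))) := by
        intro a b h
        simp only [Prod.ext_iff] at h ⊢
        exact ⟨⟨h.2.1, h.2.2.1, h.1⟩, h.2.2.2⟩
      have hB := law_value_new lam s (fun a => (a.1, a.2.1, a.2.2.2))
        (fun ω => ((ω.1, ω.2.1, ω.2.2.2.1), ω.2.2.2.2))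
        (fun c => (c.1.2.2, (c.1.1, c.1.2.1, c.2))) heB (fun ω => rfl)
        ((x, y, i), v)
      rw [hA, hB, hV, hZV]
      simp only
      rw [lawOf_id']
      by_cases hi : lam i = 0
      · rw [hi]; ring
      · obtain ⟨t, hwt, hsi⟩ := hsel i hi
        rw [hsi]
        have hc := chainC2 p hp0 hch2 hwt x y z v
        linear_combination lam i * hc
    exact goal
  -- entropies, new side
  have hn1 : ent (pNew lam s) (fun w => (w.2.2.2.1, w.2.2.2.2)) = H2 lam := by
    have h0 : ent (pNew lam s) (fun ω => (ω.2.2.2.1, (fun a :  𝒳 × 𝒴 × 𝒵 × Fin nV => a.2.2.2) (amap ω)))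
        = H2 lam + ∑ i, lam i * H2 (lawOf (s i) (fun a => a.2.2.2)) :=
      ent_pNew_pair lam s hs1 (fun a => a.2.2.2)
    have hz : ∑ i, lam i * H2 (lawOf (s i) (fun a => a.2.2.2)) = 0 := by
      refine Finset.sum_eq_zero fun i _ => ?_
      by_cases hi : lam i = 0
      · rw [hi]; ring
      · obtain ⟨t, hwt, hsi⟩ := hsel i hi
        rw [hsi, H2_lawOf_vproj_eq_zero p hp0 hwt, mul_zero]
    calc ent (pNew lam s) (fun w => (w.2.2.2.1, w.2.2.2.2))
        = H2 lam + ∑ i, lam i * H2 (lawOf (s i) (fun a => a.2.2.2)) := h0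
      _ = H2 lam := by rw [hz, add_zero]
  have hn2 : ent (pNew lam s) (fun w => w.2.2.2.1) = H2 lam := by
    unfold ent
    rw [lawOf_pNew_idx lam s hσ]
  -- entropies determined by the (X,Y,Z,V)-marginal agree on both sides
  have oX : ent p (fun w => w.1) = H2 (lawOf (mm p) (fun a => a.1)) :=
    congrArg H2 (lawOf_comp p amap (fun a => a.1))
  have nX : ent (pNew lam s) (fun w => w.1) = H2 (lawOf (mm p) (fun a => a.1)) := by
    have h := lawOf_comp (pNew lam s) amap (fun a => a.1)
    rw [hAm] at h
    exact congrArg H2 h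
  have oV : ent p (fun w => w.2.2.2.2) = H2 (lawOf (mm p) (fun a => a.2.2.2)) :=
    congrArg H2 (lawOf_comp p amap (fun a => a.2.2.2))
  have nV' : ent (pNew lam s) (fun w => w.2.2.2.2)
      = H2 (lawOf (mm p) (fun a => a.2.2.2)) := by
    have h := lawOf_comp (pNew lam s) amap (fun a => a.2.2.2)
    rw [hAm] at h
    exact congrArg H2 h
  have oXV : ent p (fun w => (w.1, w.2.2.2.2))
      = H2 (lawOf (mm p) (fun a => (a.1, a.2.2.2))) :=
    congrArg H2 (lawOf_comp p amap (fun a => (a.1, a.2.2.2)))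
  have nXV : ent (pNew lam s) (fun w => (w.1, w.2.2.2.2))
      = H2 (lawOf (mm p) (fun a => (a.1, a.2.2.2))) := by
    have h := lawOf_comp (pNew lam s) amap (fun a => (a.1, a.2.2.2))
    rw [hAm] at h
    exact congrArg H2 h
  have oXYZ : ent p (fun w => (w.1, w.2.1, w.2.2.1))
      = H2 (lawOf (mm p) (fun a => (a.1, a.2.1, a.2.2.1))) :=
    congrArg H2 (lawOf_comp p amap (fun a => (a.1, a.2.1, a.2.2.1)))
  have nXYZ : ent (pNew lam s) (fun w => (w.1, w.2.1, w.2.2.1))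
      = H2 (lawOf (mm p) (fun a => (a.1, a.2.1, a.2.2.1))) := by
    have h := lawOf_comp (pNew lam s) amap (fun a => (a.1, a.2.1, a.2.2.1))
    rw [hAm] at h
    exact congrArg H2 h
  -- entropies of pairs with the auxiliary index
  have oUV : ent p (fun w => ((w.2.2.2.1, w.2.2.2.2) : Fin nU × Fin nV)) = H2 (wgt p) := rfl
  have oP : ent p (fun ω => (ω.1, ((ω.2.2.2.1, ω.2.2.2.2) : Fin nU × Fin nV)))
      = H2 (wgt p) + ∑ t, wgt p t * H2 (lawOf (qc p t) (fun a => (a.1, a.2.2.2))) := by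
    have he : Function.Injective (fun c : 𝒳 × (Fin nU × Fin nV) =>
        ((c.2, (c.1, c.2.2)) : (Fin nU × Fin nV) × (𝒳 × Fin nV))) := by
      intro a b h
      simp only [Prod.ext_iff] at h ⊢
      exact ⟨h.2.1, h.1⟩
    have h1 := ent_comp_inj he p
      (fun ω => (ω.1, ((ω.2.2.2.1, ω.2.2.2.2) : Fin nU × Fin nV)))
    exact h1.symm.trans (ent_p_pair p hp0 (fun a => (a.1, a.2.2.2)))
  have nP : ent (pNew lam s) (fun ω => (ω.1, ((ω.2.2.2.1, ω.2.2.2.2) : Fin N × Fin nV)))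
      = H2 lam + ∑ i, lam i * H2 (lawOf (s i) (fun a => (a.1, a.2.2.2))) := by
    have he : Function.Injective (fun c : 𝒳 × (Fin N × Fin nV) =>
        ((c.2.1, (c.1, c.2.2)) : Fin N × (𝒳 × Fin nV))) := by
      intro a b h
      simp only [Prod.ext_iff] at h ⊢
      exact ⟨h.2.1, h.1, h.2.2⟩
    have h1 := ent_comp_inj he (pNew lam s)
      (fun ω => (ω.1, ((ω.2.2.2.1, ω.2.2.2.2) : Fin N × Fin nV)))
    exact h1.symm.trans (ent_pNew_pair lam s hs1 (fun a => (a.1, a.2.2.2)))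
  have oT : ent p (fun ω => ((ω.1, ω.2.1, ω.2.2.1),
        ((ω.2.2.2.1, ω.2.2.2.2) : Fin nU × Fin nV)))
      = H2 (wgt p) + ∑ t, wgt p t * H2 (lawOf (qc p t) (fun a => a)) := by
    have he : Function.Injective (fun c : (𝒳 × 𝒴 × 𝒵) × (Fin nU × Fin nV) =>
        ((c.2, (c.1.1, c.1.2.1, c.1.2.2, c.2.2))
          : (Fin nU × Fin nV) × (𝒳 × 𝒴 × 𝒵 × Fin nV))) := by
      intro a b h
      simp only [Prod.ext_iff] at h ⊢
      exact ⟨⟨h.2.1, h.2.2.1, h.2.2.2.1⟩, h.1⟩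
    have h1 := ent_comp_inj he p
      (fun ω => ((ω.1, ω.2.1, ω.2.2.1), ((ω.2.2.2.1, ω.2.2.2.2) : Fin nU × Fin nV)))
    exact h1.symm.trans (ent_p_pair p hp0 (fun a => a))
  have nT : ent (pNew lam s) (fun ω => ((ω.1, ω.2.1, ω.2.2.1),
        ((ω.2.2.2.1, ω.2.2.2.2) : Fin N × Fin nV)))
      = H2 lam + ∑ i, lam i * H2 (lawOf (s i) (fun a => a)) := by
    have he : Function.Injective (fun c : (𝒳 × 𝒴 × 𝒵) × (Fin N × Fin nV) =>
        ((c.2.1, (c.1.1, c.1.2.1, c.1.2.2, c.2.2)) : Fin N × (𝒳 × 𝒴 × 𝒵 × Fin nV))) := by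
      intro a b h
      simp only [Prod.ext_iff] at h ⊢
      exact ⟨⟨h.2.1, h.2.2.1, h.2.2.2.1⟩, h.1, h.2.2.2.2⟩
    have h1 := ent_comp_inj he (pNew lam s)
      (fun ω => ((ω.1, ω.2.1, ω.2.2.1), ((ω.2.2.2.1, ω.2.2.2.2) : Fin N × Fin nV)))
    exact h1.symm.trans (ent_pNew_pair lam s hs1 (fun a => a))
  refine ⟨⟨hpmf, hmargN, hch1N, hch2N⟩, by rw [hn1, hn2], ?_, ?_, ?_⟩
  · unfold mi
    rw [nX, hn1, nP, oX, oUV, oP, hH1]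
    ring
  · unfold mi
    rw [nX, nV', nXV, oX, oV, oXV]
  · unfold mi
    rw [nXYZ, hn1, nT, oXYZ, oUV, oT, hH2]
    ring

end Machine5

section Machine6

variable {𝒳 𝒴 𝒵 : Type} [Fintype 𝒳] [Fintype 𝒴] [Fintype 𝒵]
  [DecidableEq 𝒳] [DecidableEq 𝒴] [DecidableEq 𝒵] {nU nV : ℕ}

theorem caratheodory_select [Nonempty 𝒳] [Nonempty 𝒴] [Nonempty 𝒵] (hnV : 0 < nV)
    (p : 𝒳 × 𝒴 × 𝒵 × Fin nU × Fin nV → ℝ) (hp0 : ∀ ω, 0 ≤ p ω) (hp1 : ∑ ω, p ω = 1) :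
    ∃ (lam : Fin (Fintype.card 𝒳 * Fintype.card 𝒴 * Fintype.card 𝒵 * nV + 2) → ℝ)
      (s : Fin (Fintype.card 𝒳 * Fintype.card 𝒴 * Fintype.card 𝒵 * nV + 2)
        → 𝒳 × 𝒴 × 𝒵 × Fin nV → ℝ),
      (∀ i, 0 ≤ lam i) ∧ (∀ i a, 0 ≤ s i a) ∧
      (∀ i, lam i ≠ 0 → ∃ t, wgt p t ≠ 0 ∧ s i = qc p t) ∧
      ((fun a => ∑ i, lam i * s i a) = mm p) ∧
      (∑ i, lam i * H2 (lawOf (s i) (fun a => (a.1, a.2.2.2)))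
        = ∑ t, wgt p t * H2 (lawOf (qc p t) (fun a => (a.1, a.2.2.2)))) ∧
      (∑ i, lam i * H2 (lawOf (s i) (fun a => a))
        = ∑ t, wgt p t * H2 (lawOf (qc p t) (fun a => a))) := by
  classical
  set N := Fintype.card 𝒳 * Fintype.card 𝒴 * Fintype.card 𝒵 * nV + 2 with hN
  haveI : Nonempty (Fin nV) := ⟨⟨0, hnV⟩⟩
  haveI : Nonempty (𝒳 × 𝒴 × 𝒵 × Fin nV) := inferInstance
  set a0 : 𝒳 × 𝒴 × 𝒵 × Fin nV := Classical.arbitrary _ with ha0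
  -- the Euclidean space used for Carathéodory
  let E := ({a : 𝒳 × 𝒴 × 𝒵 × Fin nV // a ≠ a0} → ℝ) × ℝ × ℝ
  let Φ : Fin nU × Fin nV → E := fun t =>
    (fun a' => qc p t a'.1, H2 (lawOf (qc p t) (fun a => (a.1, a.2.2.2))),
      H2 (lawOf (qc p t) (fun a => a)))
  have hwsum : ∑ t, wgt p t = 1 := by
    unfold wgt
    rw [sum_lawOf]; exact hp1
  -- the barycenter lies in the convex hull of the support image
  set xbar : E := ∑ t, wgt p t • Φ t with hxbar
  have hmem : xbar ∈ convexHull ℝ (Φ '' {t | wgt p t ≠ 0}) := by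
    have h1 : ((univ : Finset (Fin nU × Fin nV)).filter (fun t => wgt p t ≠ 0)).centerMass
        (wgt p) Φ ∈ convexHull ℝ (Φ '' {t | wgt p t ≠ 0}) := by
      refine Finset.centerMass_mem_convexHull _ (fun t _ => wgt_nonneg p hp0 t) ?_ ?_
      · rw [Finset.sum_filter_ne_zero, hwsum]; exact one_pos
      · intro t ht
        exact Set.mem_image_of_mem Φ (Finset.mem_filter.1 ht).2
    have h2 : ((univ : Finset (Fin nU × Fin nV)).filter (fun t => wgt p t ≠ 0)).centerMass
        (wgt p) Φ = xbar := by
      rw [Finset.centerMass_eq_of_sum_1 _ _ (by rw [Finset.sum_filter_ne_zero, hwsum])]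
      rw [hxbar]
      refine Finset.sum_filter_of_ne fun t _ h => ?_
      intro hw
      exact h (by rw [hw, zero_smul])
    rwa [h2] at h1
  obtain ⟨ι, hι, z, μ, hzs, hai, hμpos, hμsum, hrep⟩ :=
    eq_pos_convex_span_of_mem_convexHull hmem
  -- cardinality bound
  have hcard : Fintype.card ι ≤ N := by
    have h1 := hai.card_le_finrank_succ (k := ℝ)
    have h2 : Module.finrank ℝ (vectorSpan ℝ (Set.range z)) ≤ Module.finrank ℝ E :=
      Submodule.finrank_le _
    have h3 : Module.finrank ℝ E
        = Fintype.card {a : 𝒳 × 𝒴 × 𝒵 × Fin nV // a ≠ a0} + 2 := by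
      show Module.finrank ℝ (({a : 𝒳 × 𝒴 × 𝒵 × Fin nV // a ≠ a0} → ℝ) × ℝ × ℝ) = _
      rw [Module.finrank_prod, Module.finrank_prod, Module.finrank_pi, Module.finrank_self]
    have h4 : Fintype.card {a : 𝒳 × 𝒴 × 𝒵 × Fin nV // a ≠ a0}
        = Fintype.card (𝒳 × 𝒴 × 𝒵 × Fin nV) - 1 := by
      have hc := Fintype.card_subtype_compl (α := 𝒳 × 𝒴 × 𝒵 × Fin nV) (fun a => a = a0)
      rw [Fintype.card_subtype_eq] at hc
      exact hc
    have h5 : Fintype.card (𝒳 × 𝒴 × 𝒵 × Fin nV)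
        = Fintype.card 𝒳 * Fintype.card 𝒴 * Fintype.card 𝒵 * nV := by
      simp [Fintype.card_prod, Fintype.card_fin]
      ring
    have h6 : 1 ≤ Fintype.card (𝒳 × 𝒴 × 𝒵 × Fin nV) := Fintype.card_pos
    have h7 : Fintype.card ι ≤ Module.finrank ℝ E + 1 :=
      le_trans h1 (Nat.add_le_add_right h2 1)
    rw [h3, h4, h5] at h7
    omega
  -- the injection of ι into Fin N
  let emb : ι → Fin N := fun j => Fin.castLE hcard ((Fintype.equivFin ι) j)
  have hembinj : Function.Injective emb :=
    (Fin.castLE_injective hcard).comp (Fintype.equivFin ι).injective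
  -- choose preimages under Φ
  have hzmem : ∀ j : ι, z j ∈ Φ '' {t | wgt p t ≠ 0} := fun j => hzs ⟨j, rfl⟩
  let tsel : ι → Fin nU × Fin nV := fun j => (hzmem j).choose
  have htsel : ∀ j, wgt p (tsel j) ≠ 0 ∧ Φ (tsel j) = z j := fun j => (hzmem j).choose_spec
  -- the data
  refine ⟨fun i => if h : ∃ j, emb j = i then μ h.choose else 0,
    fun i => if h : ∃ j, emb j = i then qc p (tsel h.choose) else fun _ => 0,
    ?_, ?_, ?_, ?_, ?_, ?_⟩
  · intro i
    beta_reduce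
    by_cases h : ∃ j, emb j = i
    · rw [dif_pos h]; exact le_of_lt (hμpos _)
    · rw [dif_neg h]
  · intro i a
    show (0:ℝ) ≤ (if h : ∃ j, emb j = i then qc p (tsel h.choose) else fun _ => 0) a
    by_cases h : ∃ j, emb j = i
    · rw [dif_pos h]; exact qc_nonneg p hp0 _ a
    · rw [dif_neg h]
  · intro i hi
    beta_reduce at hi ⊢
    by_cases h : ∃ j, emb j = i
    · refine ⟨tsel h.choose, (htsel h.choose).1, ?_⟩
      rw [dif_pos h]
    · rw [dif_neg h] at hi; exact absurd rfl hi
  · -- the preserved (X,Y,Z,V)-marginal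
    have transfer : ∀ G : ((𝒳 × 𝒴 × 𝒵 × Fin nV) → ℝ) → ℝ,
        (∑ i : Fin N, (if h : ∃ j, emb j = i then μ h.choose else 0)
          * G (if h : ∃ j, emb j = i then qc p (tsel h.choose) else fun _ => 0))
        = ∑ j, μ j * G (qc p (tsel j)) := by
      intro G
      have hterm : ∀ i : Fin N, (if h : ∃ j, emb j = i then μ h.choose else 0)
          * G (if h : ∃ j, emb j = i then qc p (tsel h.choose) else fun _ => 0)
          = (if h : ∃ j, emb j = i then μ h.choose * G (qc p (tsel h.choose)) else 0) := by
        intro i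
        by_cases h : ∃ j, emb j = i
        · rw [dif_pos h, dif_pos h, dif_pos h]
        · rw [dif_neg h, dif_neg h, dif_neg h, zero_mul]
      rw [Finset.sum_congr rfl fun i _ => hterm i]
      exact sum_dite_emb emb hembinj (fun j => μ j * G (qc p (tsel j)))
    have hcoord : ∀ (L : E →ₗ[ℝ] ℝ), ∑ j, μ j * L (z j) = ∑ t, wgt p t * L (Φ t) := by
      intro L
      have h1 := congrArg L hrep
      rw [hxbar, map_sum, map_sum] at h1
      simpa [L.map_smul, smul_eq_mul] using h1
    have hq : ∀ (a : 𝒳 × 𝒴 × 𝒵 × Fin nV) (ha : a ≠ a0),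
        ∑ j, μ j * qc p (tsel j) a = ∑ t, wgt p t * qc p t a := by
      intro a ha
      have h := hcoord ((LinearMap.proj (⟨a, ha⟩ : {a // a ≠ a0})).comp
        (LinearMap.fst ℝ _ _))
      calc ∑ j, μ j * qc p (tsel j) a
          = ∑ j, μ j * ((LinearMap.proj (⟨a, ha⟩ : {a // a ≠ a0})).comp
            (LinearMap.fst ℝ ({a : 𝒳 × 𝒴 × 𝒵 × Fin nV // a ≠ a0} → ℝ) (ℝ × ℝ))) (z j) := by
            refine Finset.sum_congr rfl fun j _ => ?_
            rw [← (htsel j).2]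
            rfl
        _ = ∑ t, wgt p t * qc p t a := h
    have hLa : ∑ a, (∑ j, μ j * qc p (tsel j) a) = 1 := by
      rw [Finset.sum_comm]
      have : ∀ j, ∑ a, μ j * qc p (tsel j) a = μ j := by
        intro j
        rw [← Finset.mul_sum, qc_sum p hp0 (htsel j).1, mul_one]
      rw [Finset.sum_congr rfl fun j _ => this j]
      exact hμsum
    have hRa : ∑ a, (∑ t, wgt p t * qc p t a) = 1 := by
      rw [Finset.sum_comm]
      have : ∀ t, ∑ a, wgt p t * qc p t a = wgt p t := by
        intro t
        by_cases ht : wgt p t = 0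
        · simp [ht]
        · rw [← Finset.mul_sum, qc_sum p hp0 ht, mul_one]
      rw [Finset.sum_congr rfl fun t _ => this t]
      exact hwsum
    have hLR : ∀ a, ∑ j, μ j * qc p (tsel j) a = ∑ t, wgt p t * qc p t a := by
      intro a
      by_cases ha : a = a0
      · rw [ha]
        have h1 := Finset.add_sum_erase univ
          (fun a => ∑ j, μ j * qc p (tsel j) a) (Finset.mem_univ a0)
        have h2 := Finset.add_sum_erase univ
          (fun a' => ∑ t, wgt p t * qc p t a') (Finset.mem_univ a0)
        rw [hLa] at h1
        rw [hRa] at h2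
        have h3 : ∑ a' ∈ Finset.erase univ a0, (∑ j, μ j * qc p (tsel j) a')
            = ∑ a' ∈ Finset.erase univ a0, (∑ t, wgt p t * qc p t a') :=
          Finset.sum_congr rfl fun a' ha' => hq a' (Finset.ne_of_mem_erase ha')
        linarith
      · exact hq a ha
    have hmmeq : ∀ a, ∑ t, wgt p t * qc p t a = mm p a := by
      intro a
      rw [mm_eq_sum]
      exact Finset.sum_congr rfl fun t _ => (rj_eq p hp0 (t, a)).symm
    funext a
    calc (∑ i : Fin N, (if h : ∃ j, emb j = i then μ h.choose else 0)
          * (if h : ∃ j, emb j = i then qc p (tsel h.choose) else fun _ => 0) a)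
        = ∑ j, μ j * qc p (tsel j) a := transfer (fun q => q a)
      _ = ∑ t, wgt p t * qc p t a := hLR a
      _ = mm p a := hmmeq a
  · -- preservation of the first entropy functional
    have transfer : ∀ G : ((𝒳 × 𝒴 × 𝒵 × Fin nV) → ℝ) → ℝ,
        (∑ i : Fin N, (if h : ∃ j, emb j = i then μ h.choose else 0)
          * G (if h : ∃ j, emb j = i then qc p (tsel h.choose) else fun _ => 0))
        = ∑ j, μ j * G (qc p (tsel j)) := by
      intro G
      have hterm : ∀ i : Fin N, (if h : ∃ j, emb j = i then μ h.choose else 0)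
          * G (if h : ∃ j, emb j = i then qc p (tsel h.choose) else fun _ => 0)
          = (if h : ∃ j, emb j = i then μ h.choose * G (qc p (tsel h.choose)) else 0) := by
        intro i
        by_cases h : ∃ j, emb j = i
        · rw [dif_pos h, dif_pos h, dif_pos h]
        · rw [dif_neg h, dif_neg h, dif_neg h, zero_mul]
      rw [Finset.sum_congr rfl fun i _ => hterm i]
      exact sum_dite_emb emb hembinj (fun j => μ j * G (qc p (tsel j)))
    have hcoord : ∀ (L : E →ₗ[ℝ] ℝ), ∑ j, μ j * L (z j) = ∑ t, wgt p t * L (Φ t) := by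
      intro L
      have h1 := congrArg L hrep
      rw [hxbar, map_sum, map_sum] at h1
      simpa [L.map_smul, smul_eq_mul] using h1
    have h := hcoord ((LinearMap.fst ℝ ℝ ℝ).comp
      (LinearMap.snd ℝ ({a : 𝒳 × 𝒴 × 𝒵 × Fin nV // a ≠ a0} → ℝ) (ℝ × ℝ)))
    calc (∑ i : Fin N, (if h : ∃ j, emb j = i then μ h.choose else 0)
          * H2 (lawOf (if h : ∃ j, emb j = i then qc p (tsel h.choose) else fun _ => 0)
            (fun a => (a.1, a.2.2.2))))
        = ∑ j, μ j * H2 (lawOf (qc p (tsel j)) (fun a => (a.1, a.2.2.2))) :=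
          transfer (fun q => H2 (lawOf q (fun a => (a.1, a.2.2.2))))
      _ = ∑ j, μ j * ((LinearMap.fst ℝ ℝ ℝ).comp
            (LinearMap.snd ℝ ({a : 𝒳 × 𝒴 × 𝒵 × Fin nV // a ≠ a0} → ℝ) (ℝ × ℝ))) (z j) := by
          refine Finset.sum_congr rfl fun j _ => ?_
          rw [← (htsel j).2]
          rfl
      _ = ∑ t, wgt p t * H2 (lawOf (qc p t) (fun a => (a.1, a.2.2.2))) := h
  · -- preservation of the second entropy functional
    have transfer : ∀ G : ((𝒳 × 𝒴 × 𝒵 × Fin nV) → ℝ) → ℝ,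
        (∑ i : Fin N, (if h : ∃ j, emb j = i then μ h.choose else 0)
          * G (if h : ∃ j, emb j = i then qc p (tsel h.choose) else fun _ => 0))
        = ∑ j, μ j * G (qc p (tsel j)) := by
      intro G
      have hterm : ∀ i : Fin N, (if h : ∃ j, emb j = i then μ h.choose else 0)
          * G (if h : ∃ j, emb j = i then qc p (tsel h.choose) else fun _ => 0)
          = (if h : ∃ j, emb j = i then μ h.choose * G (qc p (tsel h.choose)) else 0) := by
        intro i
        by_cases h : ∃ j, emb j = i
        · rw [dif_pos h, dif_pos h, dif_pos h]
        · rw [dif_neg h, dif_neg h, dif_neg h, zero_mul]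
      rw [Finset.sum_congr rfl fun i _ => hterm i]
      exact sum_dite_emb emb hembinj (fun j => μ j * G (qc p (tsel j)))
    have hcoord : ∀ (L : E →ₗ[ℝ] ℝ), ∑ j, μ j * L (z j) = ∑ t, wgt p t * L (Φ t) := by
      intro L
      have h1 := congrArg L hrep
      rw [hxbar, map_sum, map_sum] at h1
      simpa [L.map_smul, smul_eq_mul] using h1
    have h := hcoord ((LinearMap.snd ℝ ℝ ℝ).comp
      (LinearMap.snd ℝ ({a : 𝒳 × 𝒴 × 𝒵 × Fin nV // a ≠ a0} → ℝ) (ℝ × ℝ)))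
    calc (∑ i : Fin N, (if h : ∃ j, emb j = i then μ h.choose else 0)
          * H2 (lawOf (if h : ∃ j, emb j = i then qc p (tsel h.choose) else fun _ => 0)
            (fun a => a)))
        = ∑ j, μ j * H2 (lawOf (qc p (tsel j)) (fun a => a)) :=
          transfer (fun q => H2 (lawOf q (fun a => a)))
      _ = ∑ j, μ j * ((LinearMap.snd ℝ ℝ ℝ).comp
            (LinearMap.snd ℝ ({a : 𝒳 × 𝒴 × 𝒵 × Fin nV // a ≠ a0} → ℝ) (ℝ × ℝ))) (z j) := by
          refine Finset.sum_congr rfl fun j _ => ?_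
          rw [← (htsel j).2]
          rfl
      _ = ∑ t, wgt p t * H2 (lawOf (qc p t) (fun a => a)) := h

end Machine6

section AuxPart2

theorem aux_part2 {𝒳 𝒴 𝒵 : Type} [Fintype 𝒳] [Fintype 𝒴] [Fintype 𝒵]
    [DecidableEq 𝒳] [DecidableEq 𝒴] [DecidableEq 𝒵]
    [Nonempty 𝒳] [Nonempty 𝒴] [Nonempty 𝒵]
    (QX : 𝒳 → ℝ) (QYZ : 𝒳 → 𝒴 × 𝒵 → ℝ)
    (nU nV : ℕ) (p : 𝒳 × 𝒴 × 𝒵 × Fin nU × Fin nV → ℝ)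
    (hnV : nV ≤ Fintype.card 𝒳 * Fintype.card 𝒴 * Fintype.card 𝒵 + 3)
    (hnU : nU ≤ Fintype.card 𝒳 * Fintype.card 𝒴 * Fintype.card 𝒵 * nV + 2)
    (hInD : InD' QX QYZ p) :
    ∃ (nU' nV' : ℕ) (p' : 𝒳 × 𝒴 × 𝒵 × Fin nU' × Fin nV' → ℝ),
      nV' ≤ Fintype.card 𝒳 * Fintype.card 𝒴 * Fintype.card 𝒵 + 3 ∧
      nU' ≤ Fintype.card 𝒳 * Fintype.card 𝒴 * Fintype.card 𝒵 * nV' + 2 ∧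
      InD' QX QYZ p' ∧
      ent p' (fun w => (w.2.2.2.1, w.2.2.2.2)) = ent p' (fun w => w.2.2.2.1) ∧
      mi p' (fun w => w.1) (fun w => (w.2.2.2.1, w.2.2.2.2))
        ≤ mi p (fun w => w.1) (fun w => (w.2.2.2.1, w.2.2.2.2)) ∧
      mi p' (fun w => w.1) (fun w => w.2.2.2.2)
        ≤ mi p (fun w => w.1) (fun w => w.2.2.2.2) ∧
      mi p' (fun w => (w.1, w.2.1, w.2.2.1)) (fun w => (w.2.2.2.1, w.2.2.2.2))
        ≤ mi p (fun w => (w.1, w.2.1, w.2.2.1)) (fun w => (w.2.2.2.1, w.2.2.2.2)) := by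
  have h1V : 0 < nV := by
    rcases Nat.eq_zero_or_pos nV with h0 | h1
    · exfalso
      subst h0
      have h := hInD.1.2
      rw [Finset.sum_eq_zero (fun ω _ => (ω.2.2.2.2).elim0)] at h
      norm_num at h
    · exact h1
  obtain ⟨lam, s, hlam0, hs0, hsel, hmargC, hH1, hH2⟩ :=
    caratheodory_select h1V p hInD.1.1 hInD.1.2
  obtain ⟨hInD', hent, hmi1, hmi2, hmi3⟩ :=
    pNew_good QX QYZ p lam s hInD hlam0 hs0 hsel hmargC hH1 hH2
  exact ⟨Fintype.card 𝒳 * Fintype.card 𝒴 * Fintype.card 𝒵 * nV + 2, nV, pNew lam s,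
    hnV, le_refl _, hInD', hent, le_of_eq hmi1, le_of_eq hmi2, le_of_eq hmi3⟩

end AuxPart2

/-- **`S_D = S_{D'}`**: restricting to auxiliary variables where `V` is a
deterministic function of `U` does not shrink the single-letter region.  In
particular, every `P_{XYZUV} ∈ D` is dominated by some `P'_{XYZU'V'} ∈ D` with
`H(V'|U') = 0` and pointwise no larger rate constraints. -/
theorem SD_eq_SD' {𝒳 𝒴 𝒵 : Type} [Fintype 𝒳] [Fintype 𝒴] [Fintype 𝒵]
    [DecidableEq 𝒳] [DecidableEq 𝒴] [DecidableEq 𝒵]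
    [Nonempty 𝒳] [Nonempty 𝒴] [Nonempty 𝒵]
    (QX : 𝒳 → ℝ) (QYZ : 𝒳 → 𝒴 × 𝒵 → ℝ)
    (hQX : IsPmf QX) (hQYZ : ∀ x, IsPmf (QYZ x)) :
    (∀ R0 R1 R2 : ℝ, InSD QX QYZ R0 R1 R2 ↔ InSD' QX QYZ R0 R1 R2) ∧
    (∀ (nU nV : ℕ) (p : 𝒳 × 𝒴 × 𝒵 × Fin nU × Fin nV → ℝ),
      nV ≤ Fintype.card 𝒳 * Fintype.card 𝒴 * Fintype.card 𝒵 + 3 →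
      nU ≤ Fintype.card 𝒳 * Fintype.card 𝒴 * Fintype.card 𝒵 * nV + 2 →
      InD QX QYZ p →
      ∃ (nU' nV' : ℕ) (p' : 𝒳 × 𝒴 × 𝒵 × Fin nU' × Fin nV' → ℝ),
        nV' ≤ Fintype.card 𝒳 * Fintype.card 𝒴 * Fintype.card 𝒵 + 3 ∧
        nU' ≤ Fintype.card 𝒳 * Fintype.card 𝒴 * Fintype.card 𝒵 * nV' + 2 ∧
        InD QX QYZ p' ∧
        ent p' (fun w => (w.2.2.2.1, w.2.2.2.2)) = ent p' (fun w => w.2.2.2.1) ∧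
        mi p' (fun w => w.1) (fun w => (w.2.2.2.1, w.2.2.2.2))
          ≤ mi p (fun w => w.1) (fun w => (w.2.2.2.1, w.2.2.2.2)) ∧
        mi p' (fun w => w.1) (fun w => w.2.2.2.2)
          ≤ mi p (fun w => w.1) (fun w => w.2.2.2.2) ∧
        mi p' (fun w => (w.1, w.2.1, w.2.2.1)) (fun w => (w.2.2.2.1, w.2.2.2.2))
          ≤ mi p (fun w => (w.1, w.2.1, w.2.2.1)) (fun w => (w.2.2.2.1, w.2.2.2.2))) := by
  have part2 : ∀ (nU nV : ℕ) (p : 𝒳 × 𝒴 × 𝒵 × Fin nU × Fin nV → ℝ),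
      nV ≤ Fintype.card 𝒳 * Fintype.card 𝒴 * Fintype.card 𝒵 + 3 →
      nU ≤ Fintype.card 𝒳 * Fintype.card 𝒴 * Fintype.card 𝒵 * nV + 2 →
      InD QX QYZ p →
      ∃ (nU' nV' : ℕ) (p' : 𝒳 × 𝒴 × 𝒵 × Fin nU' × Fin nV' → ℝ),
        nV' ≤ Fintype.card 𝒳 * Fintype.card 𝒴 * Fintype.card 𝒵 + 3 ∧
        nU' ≤ Fintype.card 𝒳 * Fintype.card 𝒴 * Fintype.card 𝒵 * nV' + 2 ∧
        InD QX QYZ p' ∧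
        ent p' (fun w => (w.2.2.2.1, w.2.2.2.2)) = ent p' (fun w => w.2.2.2.1) ∧
        mi p' (fun w => w.1) (fun w => (w.2.2.2.1, w.2.2.2.2))
          ≤ mi p (fun w => w.1) (fun w => (w.2.2.2.1, w.2.2.2.2)) ∧
        mi p' (fun w => w.1) (fun w => w.2.2.2.2)
          ≤ mi p (fun w => w.1) (fun w => w.2.2.2.2) ∧
        mi p' (fun w => (w.1, w.2.1, w.2.2.1)) (fun w => (w.2.2.2.1, w.2.2.2.2))
          ≤ mi p (fun w => (w.1, w.2.1, w.2.2.1)) (fun w => (w.2.2.2.1, w.2.2.2.2)) := by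
    intro nU nV p hnV hnU hInD
    exact aux_part2 QX QYZ nU nV p hnV hnU hInD
  refine ⟨?_, part2⟩
  intro R0 R1 R2
  constructor
  · rintro ⟨nU, nV, p, hnV, hnU, hInD, h1, h2, h0⟩
    obtain ⟨nU', nV', p', hnV', hnU', hInD', hent, k1, k2, k3⟩ := part2 nU nV p hnV hnU hInD
    exact ⟨nU', nV', p', hnV', hnU', hInD', hent, le_trans k1 h1, le_trans k2 h2,
      le_trans k3 h0⟩
  · rintro ⟨nU, nV, p, hnV, hnU, hInD, _, h1, h2, h0⟩
    exact ⟨nU, nV, p, hnV, hnU, hInD, h1, h2, h0⟩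

end
end

section
/- Let W^n = (W_1,…,W_n) be random variables each taking values in a finite alphabet 𝒲, and suppose ‖P_{W^n} − ∏_{t=1}^n Q_W‖_TV = ε for some pmf Q_W on 𝒲 and ε ∈ (0,1/4). Then Σ_{t=1}^n I(W_t ; W^{t−1}) ≤ n·g(ε), where g(ε) = 4ε·log(|𝒲|/ε). In the paper's application, W_t = (X_t,Y_t,Z_t), 𝒲 = 𝒳×𝒴×𝒵, and Q_W = Q_X Q_{YZ|X}, giving Σ_{t=1}^n I(X_t,Y_t,Z_t ; X^{t−1},Y^{t−1},Z^{t−1}) ≤ n·g(ε) with g(ε) = 4ε·log(|𝒳||𝒴||𝒵|/ε). -/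
open scoped BigOperators
open Finset Filter

noncomputable section

/-!
By the chain rule, `∑ₜ I(Wₜ; W^{t-1}) = ∑ₜ H(Wₜ) - H(Wⁿ)`. Total variation does not grow under
marginalisation, so every `P_{Wₜ}` is `2ε`-close in `ℓ¹` to `Q`, and `P_{Wⁿ}` is `2ε`-close to
`Qⁿ`, whose entropy is `n H(Q)`. Fannes' inequality `|H(u) - H(v)| ≤ η(θ) + θ log |𝒳|`
(`η = negMulLog`, `θ = ‖u - v‖₁ ≤ 1/2`) then bounds each `H(Wₜ)` above by
`H(Q) + η(2ε) + 2ε/e + 2ε log |𝒲|` and `H(Wⁿ)` below by `n H(Q) - η(2ε) - 2ε/e - 2εn log |𝒲|`;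
the `n H(Q)` terms cancel and the remaining `n + 1` copies of `η(2ε) + 2ε/e` fit into `4nε log(1/ε)`.
-/

open Real

namespace Real

lemma negMulLog_add_le {x y : ℝ} (hx : 0 ≤ x) (hy : 0 ≤ y) :
    negMulLog (x + y) ≤ negMulLog x + negMulLog y := by
  have key : ∀ a, 0 ≤ a → a ≤ x + y → a * -log (x + y) ≤ a * -log a := fun a ha hle => by
    rcases ha.eq_or_lt with rfl | ha
    · simp
    exact mul_le_mul_of_nonneg_left (neg_le_neg (log_le_log ha hle)) ha.le
  have hx' := key x hx (by linarith)
  have hy' := key y hy (by linarith)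
  simp only [negMulLog]
  linarith

lemma negMulLog_one_sub_le {d : ℝ} (hd₀ : 0 ≤ d) (hd : d ≤ 1 / 2) :
    negMulLog (1 - d) ≤ negMulLog d := by
  set φ : ℝ → ℝ := fun x => negMulLog x - negMulLog (1 - x)
  have hφ' : ∀ x ∈ Set.Ioo (0 : ℝ) (1 / 2), HasDerivAt φ (-log (x * (1 - x)) - 2) x := by
    intro x ⟨hx₀, hx⟩
    have h := (hasDerivAt_negMulLog hx₀.ne').sub
      ((hasDerivAt_negMulLog (by linarith : 1 - x ≠ 0)).comp x ((hasDerivAt_id x).const_sub 1))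
    exact h.congr_deriv (by rw [log_mul hx₀.ne' (by linarith)]; ring)
  -- `φ` vanishes at both ends of `[0, 1/2]` and is concave there, as `x (1 - x)` increases.
  have hconc : ConcaveOn ℝ (Set.Icc 0 (1 / 2)) φ := by
    refine AntitoneOn.concaveOn_of_deriv (convex_Icc _ _) (by fun_prop) ?_ ?_ <;>
      rw [interior_Icc]
    · exact fun x hx => (hφ' x hx).differentiableAt.differentiableWithinAt
    · intro x hx y hy hxy
      rw [(hφ' x hx).deriv, (hφ' y hy).deriv]
      have := log_le_log (by nlinarith [hx.1, hx.2]) (by nlinarith [hx.1, hy.2] :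
        x * (1 - x) ≤ y * (1 - y))
      linarith
  have := hconc.2 (by norm_num : (0 : ℝ) ∈ Set.Icc 0 (1 / 2))
    (by norm_num : (1 / 2 : ℝ) ∈ Set.Icc 0 (1 / 2))
    (by linarith : 0 ≤ 1 - 2 * d) (by linarith : 0 ≤ 2 * d) (by ring)
  norm_num [φ] at this
  rwa [show (1 : ℝ) - 2 * d * (1 / 2) = 1 - d by ring, show 2 * d * (1 / 2 : ℝ) = d by ring] at this

lemma negMulLog_sub_negMulLog_add_le {x d : ℝ} (hx : 0 ≤ x) (hd₀ : 0 ≤ d) (hd : d ≤ 1 / 2)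
    (hxd : x + d ≤ 1) : negMulLog x - negMulLog (x + d) ≤ negMulLog d := by
  set g : ℝ → ℝ := fun y => negMulLog y - negMulLog (y + d)
  have hg' : ∀ y ∈ Set.Ioo 0 (1 - d), HasDerivAt g (log (y + d) - log y) y := by
    intro y ⟨hy₀, _⟩
    have h := (hasDerivAt_negMulLog hy₀.ne').sub
      ((hasDerivAt_negMulLog (by linarith : y + d ≠ 0)).comp y ((hasDerivAt_id y).add_const d))
    exact h.congr_deriv (by ring)
  have hmono : MonotoneOn g (Set.Icc 0 (1 - d)) := by
    refine monotoneOn_of_deriv_nonneg (convex_Icc _ _) (by fun_prop) ?_ ?_ <;>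
      rw [interior_Icc]
    · exact fun y hy => (hg' y hy).differentiableAt.differentiableWithinAt
    · intro y hy
      rw [(hg' y hy).deriv, sub_nonneg]
      exact log_le_log hy.1 (by linarith)
  have := hmono ⟨hx, by linarith⟩ ⟨by linarith, le_rfl⟩ (by linarith : x ≤ 1 - d)
  simp only [g, sub_add_cancel, negMulLog_one, sub_zero] at this
  linarith [negMulLog_one_sub_le hd₀ hd]

lemma abs_negMulLog_sub_negMulLog_le {x y : ℝ} (hx₀ : 0 ≤ x) (hx₁ : x ≤ 1) (hy₀ : 0 ≤ y)
    (hy₁ : y ≤ 1) (hxy : |x - y| ≤ 1 / 2) :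
    |negMulLog x - negMulLog y| ≤ negMulLog |x - y| := by
  wlog h : x ≤ y generalizing x y
  · rw [abs_sub_comm, abs_sub_comm x]
    exact this hy₀ hy₁ hx₀ hx₁ (by rwa [abs_sub_comm]) (by linarith)
  rw [abs_sub_comm x y, abs_of_nonneg (by linarith : 0 ≤ y - x)] at hxy ⊢
  have hsub := negMulLog_add_le hx₀ (by linarith : 0 ≤ y - x)
  have hsub' := negMulLog_sub_negMulLog_add_le hx₀ (by linarith : 0 ≤ y - x) hxy (by linarith)
  rw [add_sub_cancel] at hsub hsub'
  rw [abs_le]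
  constructor <;> linarith

lemma negMulLog_le_exp_neg_one {t : ℝ} (ht : 0 ≤ t) : negMulLog t ≤ exp (-1) := by
  have h : negMulLog (exp (-1)) = exp (-1) := by simp [negMulLog]
  have := negMulLog_le_one_sub_self (by positivity : 0 ≤ exp 1 * t)
  calc negMulLog t = negMulLog (exp (-1) * (exp 1 * t)) := by
        rw [← mul_assoc, ← exp_add]; simp
    _ = exp 1 * t * exp (-1) + exp (-1) * negMulLog (exp 1 * t) := by
        rw [negMulLog_mul, h]
    _ ≤ exp 1 * t * exp (-1) + exp (-1) * (1 - exp 1 * t) := by gcongr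
    _ = exp (-1) := by ring

lemma negMulLog_le_of_le {θ c : ℝ} (hθ : 0 ≤ θ) (hθc : θ ≤ c) (hc : c ≤ 1) :
    negMulLog θ ≤ negMulLog c + c * exp (-1) := by
  rcases hθ.eq_or_lt with rfl | hθ₀
  · simpa using add_nonneg (negMulLog_nonneg hθc hc) (by positivity : 0 ≤ c * exp (-1))
  have hc₀ : 0 < c := hθ₀.trans_le hθc
  have ht : θ / c ≤ 1 := (div_le_one hc₀).2 hθc
  have := negMulLog_le_exp_neg_one (div_nonneg hθ hc₀.le)
  have hηc := negMulLog_nonneg hc₀.le hc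
  calc negMulLog θ = negMulLog (c * (θ / c)) := by rw [mul_div_cancel₀ _ hc₀.ne']
    _ = θ / c * negMulLog c + c * negMulLog (θ / c) := negMulLog_mul _ _
    _ ≤ 1 * negMulLog c + c * exp (-1) := by gcongr
    _ = _ := by ring

lemma sum_negMulLog_le {β : Type*} [Fintype β] (θ : β → ℝ) (hθ : ∀ b, 0 ≤ θ b) :
    ∑ b, negMulLog (θ b) ≤ negMulLog (∑ b, θ b) + (∑ b, θ b) * log (Fintype.card β) := by
  rcases isEmpty_or_nonempty β with hβ | hβ
  · simp
  set M : ℝ := (Fintype.card β : ℝ)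
  have hM : 0 < M := by positivity
  -- `η (θ b) = θ b log M + η (M θ b) / M`, and Jensen for the concave `η` with uniform weights
  have hjensen := concaveOn_negMulLog.le_map_sum (t := univ) (w := fun _ => M⁻¹)
    (p := fun b => M * θ b) (fun _ _ => by positivity) (by simp [M, hM.ne'])
    (fun b _ => Set.mem_Ici.2 (mul_nonneg hM.le (hθ b)))
  simp only [smul_eq_mul, ← mul_assoc, inv_mul_cancel₀ hM.ne', one_mul] at hjensen
  calc ∑ b, negMulLog (θ b) = ∑ b, (θ b * log M + M⁻¹ * negMulLog (M * θ b)) := by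
        refine sum_congr rfl fun b _ => ?_
        rw [negMulLog_mul]
        simp only [negMulLog]
        field_simp
        ring
    _ ≤ _ := by rw [sum_add_distrib, ← sum_mul]; linarith

end Real

def natEntropy {α : Type*} [Fintype α] (q : α → ℝ) : ℝ := ∑ a, negMulLog (q a)

lemma H2_eq_natEntropy_div {α : Type} [Fintype α] (q : α → ℝ) :
    H2 q = natEntropy q / log 2 := by
  simp only [H2, natEntropy, sum_div, ← sum_neg_distrib, logb, negMulLog]
  exact sum_congr rfl fun _ _ => by ring

namespace IsPmf

variable {α : Type} [Fintype α] {p : α → ℝ}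

lemma le_one (hp : IsPmf p) (a : α) : p a ≤ 1 :=
  hp.2 ▸ single_le_sum (fun i _ => hp.1 i) (mem_univ a)

lemma nonempty (hp : IsPmf p) : Nonempty α := by
  by_contra h
  simpa [not_nonempty_iff.1 h] using hp.2

end IsPmf

/-- **Fannes' inequality** (natural logarithm). -/
theorem abs_natEntropy_sub_le {β : Type} [Fintype β] {u v : β → ℝ} (hu : IsPmf u)
    (hv : IsPmf v) (hθ : ∑ b, |u b - v b| ≤ 1 / 2) :
    |natEntropy u - natEntropy v|
      ≤ negMulLog (∑ b, |u b - v b|) + (∑ b, |u b - v b|) * log (Fintype.card β) := by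
  have hpt : ∀ b, |u b - v b| ≤ 1 / 2 := fun b =>
    (single_le_sum (f := fun b => |u b - v b|) (fun _ _ => abs_nonneg _) (mem_univ b)).trans hθ
  calc |natEntropy u - natEntropy v|
      ≤ ∑ b, |negMulLog (u b) - negMulLog (v b)| := by
        rw [natEntropy, natEntropy, ← sum_sub_distrib]
        exact abs_sum_le_sum_abs _ _
    _ ≤ ∑ b, negMulLog |u b - v b| := sum_le_sum fun b _ =>
        abs_negMulLog_sub_negMulLog_le (hu.1 b) (hu.le_one b) (hv.1 b) (hv.le_one b) (hpt b)
    _ ≤ _ := sum_negMulLog_le _ fun _ => abs_nonneg _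

section lawOf

variable {Ω α β : Type} [Fintype Ω] [DecidableEq α] [DecidableEq β]

lemma lawOf_eq_sum_filter (p : Ω → ℝ) (f : Ω → α) (a : α) :
    lawOf p f a = ∑ ω with f ω = a, p ω := (sum_filter _ _).symm

lemma IsPmf.lawOf [Fintype α] {p : Ω → ℝ} (hp : IsPmf p) (f : Ω → α) : IsPmf (lawOf p f) :=
  ⟨fun a => by rw [lawOf_eq_sum_filter]; exact sum_nonneg fun ω _ => hp.1 ω, by
    simp_rw [lawOf_eq_sum_filter]; rw [sum_fiberwise, hp.2]⟩

lemma sum_abs_lawOf_sub_le [Fintype α] (p q : Ω → ℝ) (f : Ω → α) :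
    ∑ a, |lawOf p f a - lawOf q f a| ≤ ∑ ω, |p ω - q ω| :=
  calc ∑ a, |lawOf p f a - lawOf q f a| = ∑ a, |∑ ω with f ω = a, (p ω - q ω)| := by
        simp_rw [lawOf_eq_sum_filter, sum_sub_distrib]
    _ ≤ ∑ a, ∑ ω with f ω = a, |p ω - q ω| := sum_le_sum fun _ _ => abs_sum_le_sum_abs _ _
    _ = ∑ ω, |p ω - q ω| := sum_fiberwise _ _ _

lemma lawOf_id [DecidableEq Ω] (p : Ω → ℝ) : lawOf p (fun ω => ω) = p := by
  ext a
  simp [lawOf]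

lemma ent_comp_of_injective [Fintype α] [Fintype β] (p : Ω → ℝ) (X : Ω → α) {e : α → β}
    (he : Function.Injective e) : ent p (fun ω => e (X ω)) = ent p X := by
  have hlaw : ∀ a, lawOf p (fun ω => e (X ω)) (e a) = lawOf p X a := fun a => by
    simp only [lawOf, he.eq_iff]
  have hout : ∀ b ∉ Set.range e, lawOf p (fun ω => e (X ω)) b = 0 := fun b hb =>
    sum_eq_zero fun ω _ => if_neg fun h => hb ⟨X ω, h⟩
  simp only [ent, H2, neg_inj]
  exact (Fintype.sum_of_injective e he _ _ (fun b hb => by simp [hout b hb])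
    (fun a => by rw [hlaw])).symm

lemma ent_of_subsingleton [Fintype α] [Subsingleton α] {p : Ω → ℝ} (hp : IsPmf p)
    (X : Ω → α) : ent p X = 0 := by
  have h1 : ∀ a, lawOf p X a = 1 := fun a => by
    simp only [lawOf, Subsingleton.elim (X _) a, if_true, hp.2]
  simp [ent, H2, h1]

end lawOf

theorem abs_natEntropy_sub_le_of_le {β : Type} [Fintype β] {u v : β → ℝ} (hu : IsPmf u)
    (hv : IsPmf v) {c : ℝ} (hc : ∑ b, |u b - v b| ≤ c) (hc' : c ≤ 1 / 2) :
    |natEntropy u - natEntropy v|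
      ≤ negMulLog c + c * exp (-1) + c * log (Fintype.card β) := by
  have hθ : 0 ≤ ∑ b, |u b - v b| := sum_nonneg fun _ _ => abs_nonneg _
  have := hu.nonempty
  have hM : 0 ≤ log (Fintype.card β) := log_nonneg (by exact_mod_cast Fintype.card_pos)
  have := negMulLog_le_of_le hθ hc (by linarith)
  have := mul_le_mul_of_nonneg_right hc hM
  linarith [abs_natEntropy_sub_le hu hv (hc.trans hc')]

section chainRule

variable {𝒲 : Type} [Fintype 𝒲] [DecidableEq 𝒲] {n : ℕ}

lemma ent_take_succ (p : (Fin n → 𝒲) → ℝ) (t : Fin n) :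
    ent p (fun w => Fin.take (t + 1) t.2 w) = ent p (fun w => (w t, Fin.take t t.2.le w)) := by
  have h : ∀ w : Fin n → 𝒲,
      Fin.take (t + 1) t.2 w = Fin.snocEquiv (fun _ => 𝒲) (w t, Fin.take t t.2.le w) :=
    fun w => Fin.take_succ_eq_snoc t t.2 w
  simp_rw [h]
  exact ent_comp_of_injective p _ (Fin.snocEquiv fun _ => 𝒲).injective

lemma mi_take_eq (p : (Fin n → 𝒲) → ℝ) (t : Fin n) :
    mi p (fun w => w t) (Fin.take t t.2.le)
      = ent p (fun w => w t) + ent p (Fin.take t t.2.le) - ent p (Fin.take (t + 1) t.2) := by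
  rw [mi, ← ent_take_succ]

theorem sum_mi_past_eq (p : (Fin n → 𝒲) → ℝ) (hp : IsPmf p) :
    ∑ t : Fin n, mi p (fun w => w t) (fun w => fun s : Fin t.1 => w ⟨s.1, s.2.trans t.2⟩)
      = ∑ t, ent p (fun w => w t) - H2 p := by
  set f : ℕ → ℝ := fun k => if h : k ≤ n then ent p (Fin.take k h) else 0
  have hf : ∀ t : Fin n, ent p (Fin.take t t.2.le) - ent p (Fin.take (t + 1) t.2)
      = f t - f (t + 1) := fun t => by simp [f, t.2.le, Nat.succ_le_of_lt t.2]
  have htel : ∑ t : Fin n, (f t - f (t + 1)) = f 0 - f n := by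
    rw [Fin.sum_univ_eq_sum_range (fun i => f i - f (i + 1)), sum_range_sub']
  have hf0 : f 0 = 0 := by simp [f, ent_of_subsingleton hp]
  have hfn : f n = H2 p := by
    simp only [f, le_refl, dite_true, ent, funext (Fin.take_eq_self (α := fun _ => 𝒲)), lawOf_id]
  change ∑ t : Fin n, mi p (fun w => w t) (Fin.take t t.2.le) = _
  simp_rw [mi_take_eq, add_sub_assoc, sum_add_distrib, hf, htel, hf0, hfn]
  ring

end chainRule

section product

variable {𝒲 : Type} [Fintype 𝒲] {n : ℕ} {Q : 𝒲 → ℝ}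

lemma sum_prod_mul_apply (hQ : ∑ j, Q j = 1) (t : Fin n) (g : 𝒲 → ℝ) :
    ∑ w : Fin n → 𝒲, (∏ s, Q (w s)) * g (w t) = ∑ j, Q j * g j := by
  have hsplit : ∀ w : Fin n → 𝒲,
      (∏ s, Q (w s)) * g (w t) = ∏ s, Q (w s) * if s = t then g (w s) else 1 := fun w => by
    rw [prod_mul_distrib, prod_ite_eq' univ t]
    simp
  rw [sum_congr rfl fun w _ => hsplit w,
    ← Fintype.prod_sum fun s j => Q j * if s = t then g j else 1,
    prod_eq_single t (fun s _ hs => by simp [hs, hQ]) (by simp)]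
  simp

lemma IsPmf.pi (hQ : IsPmf Q) : IsPmf (fun w : Fin n → 𝒲 => ∏ t, Q (w t)) :=
  ⟨fun _ => prod_nonneg fun _ _ => hQ.1 _, by simp [← Fintype.prod_sum, hQ.2]⟩

lemma lawOf_pi [DecidableEq 𝒲] (hQ : ∑ j, Q j = 1) (t : Fin n) :
    lawOf (fun w : Fin n → 𝒲 => ∏ s, Q (w s)) (fun w => w t) = Q := by
  ext a
  simpa [lawOf, mul_ite] using sum_prod_mul_apply hQ t fun j => if j = a then 1 else 0

lemma negMulLog_prod {ι : Type*} (s : Finset ι) (f : ι → ℝ) :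
    negMulLog (∏ i ∈ s, f i) = ∑ i ∈ s, (∏ j ∈ s, f j) * -log (f i) := by
  rw [← mul_sum, sum_neg_distrib, negMulLog]
  by_cases h : ∏ i ∈ s, f i = 0
  · simp [h]
  · rw [log_prod fun i hi hfi => h (prod_eq_zero hi hfi)]
    ring

lemma natEntropy_pi (hQ : IsPmf Q) :
    natEntropy (fun w : Fin n → 𝒲 => ∏ t, Q (w t)) = n * natEntropy Q := by
  simp_rw [natEntropy, negMulLog_prod]
  rw [sum_comm]
  simp_rw [sum_prod_mul_apply hQ.2 _ fun j => -log (Q j)]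
  simp [negMulLog]

end product

lemma add_one_mul_negMulLog_two_mul_le {n ε : ℝ} (hn : 1 ≤ n) (hε₀ : 0 < ε) (hε : ε ≤ 1) :
    (n + 1) * (negMulLog (2 * ε) + 2 * ε * exp (-1)) ≤ n * (4 * ε * -log ε) := by
  have hx : 0 ≤ -log ε := neg_nonneg.2 (log_nonpos hε₀.le hε)
  have he : exp (-1) ≤ log 2 := by
    have h2e : 2 < exp 1 := by simpa [one_add_one_eq_two] using add_one_lt_exp one_ne_zero
    have : exp (-1) < 1 / 2 := by
      rw [exp_neg, inv_lt_comm₀ (exp_pos 1) (by norm_num)]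
      linarith
    linarith [log_two_gt_d9]
  rw [negMulLog, log_mul two_ne_zero hε₀.ne']
  nlinarith [mul_nonneg (mul_nonneg hε₀.le hx) (sub_nonneg.2 hn),
    mul_nonneg (mul_nonneg hε₀.le (sub_nonneg.2 he)) (by linarith : (0 : ℝ) ≤ n + 1)]

theorem sum_mutual_info_past_le_general
    {𝒲 : Type} [Fintype 𝒲] [DecidableEq 𝒲]
    (n : ℕ) (p : (Fin n → 𝒲) → ℝ) (Q : 𝒲 → ℝ)
    (hp : IsPmf p) (hQ : IsPmf Q) (ε : ℝ) (hε : ε ∈ Set.Ioo (0 : ℝ) (1 / 4))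
    (hTV : TV p (fun w => ∏ t, Q (w t)) = ε) :
    ∑ t : Fin n,
        mi p (fun w => w t) (fun w => fun s : Fin t.1 => w ⟨s.1, s.2.trans t.2⟩)
      ≤ (n : ℝ) * (4 * ε * Real.logb 2 ((Fintype.card 𝒲 : ℝ) / ε)) := by
  obtain ⟨hε₀, hε₁⟩ := hε
  rcases n.eq_zero_or_pos with rfl | hn
  · simp
  have := hQ.nonempty
  set M : ℝ := (Fintype.card 𝒲 : ℝ)
  set B := negMulLog (2 * ε) + 2 * ε * exp (-1)
  have hpq : ∑ w, |p w - ∏ t, Q (w t)| = 2 * ε := by rw [TV] at hTV; linarith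
  have hmarg : ∀ t : Fin n,
      natEntropy (lawOf p fun w => w t) ≤ natEntropy Q + B + 2 * ε * log M := fun t => by
    have hθ := (sum_abs_lawOf_sub_le p _ fun w => w t).trans_eq hpq
    rw [lawOf_pi hQ.2] at hθ
    linarith [(abs_le.1 (abs_natEntropy_sub_le_of_le (hp.lawOf _) hQ hθ (by linarith))).2]
  have hjoint : n * natEntropy Q - B - 2 * ε * (n * log M) ≤ natEntropy p := by
    have h := abs_natEntropy_sub_le_of_le hp hQ.pi hpq.le (by linarith)
    rw [natEntropy_pi hQ, Fintype.card_fun, Fintype.card_fin, Nat.cast_pow, log_pow] at h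
    linarith [(abs_le.1 h).1]
  have hsum := sum_le_sum fun t (_ : t ∈ univ) => hmarg t
  rw [sum_const, card_univ, Fintype.card_fin, nsmul_eq_mul] at hsum
  have harith := add_one_mul_negMulLog_two_mul_le (n := n) (by exact_mod_cast hn) hε₀ (by linarith)
  rw [sum_mi_past_eq p hp, H2_eq_natEntropy_div]
  simp_rw [ent, H2_eq_natEntropy_div, ← sum_div, div_sub_div_same]
  calc (∑ t, natEntropy (lawOf p fun w => w t) - natEntropy p) / log 2
      ≤ n * (4 * ε * (log M - log ε)) / log 2 := by gcongr; linarith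
    _ = _ := by rw [logb, log_div (by positivity) hε₀.ne']; ring

/-- **Entropy bound from total variation (Lemma VI.3 of Cuff, first part).**
If `‖P_{W^n} − ∏_t Q_W‖_TV = ε ∈ (0,1/4)`, then
`Σ_{t=1}^n I(W_t; W^{t−1}) ≤ n · g(ε)` with `g(ε) = 4ε log(|𝒲|/ε)`. -/
theorem sum_mutual_info_past_le
    {𝒲 : Type} [Fintype 𝒲] [DecidableEq 𝒲] [Nonempty 𝒲]
    (n : ℕ) (p : (Fin n → 𝒲) → ℝ) (Q : 𝒲 → ℝ)
    (hp : IsPmf p) (hQ : IsPmf Q) (ε : ℝ) (hε : ε ∈ Set.Ioo (0 : ℝ) (1 / 4))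
    (hTV : TV p (fun w => ∏ t, Q (w t)) = ε) :
    ∑ t : Fin n,
        mi p (fun w => w t) (fun w => fun s : Fin t.1 => w ⟨s.1, s.2.trans t.2⟩)
      ≤ (n : ℝ) * (4 * ε * Real.logb 2 ((Fintype.card 𝒲 : ℝ) / ε)) :=
  sum_mutual_info_past_le_general n p Q hp hQ ε hε hTV

end
end
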